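/- arXiv:math/9605202 — 7 statements merged into one kernel-verified Lean document; each statement's English description precedes it below -/
import Mathlib

section
/- Let F be a nontrivial finite group and let G_n = F for all n ∈ ℕ. Then the full direct product ∏_{n∈ℕ} G_n cannot be written as the union of a countable increasing chain of proper subgroups if and only if F is perfect (i.e., the commutator subgroup of F equals F). -/
/-!
If `F` is not perfect, it maps onto `ℤ/p` for a prime `p`; then `ℕ → F` maps onto the
`𝔽_p`-vector space `ℕ → 𝔽_p`, hence onto `ℕ →₀ 𝔽_p`, which is the union of the chain of
subspaces of sequences supported in `[0, n)`. Pulling this chain back gives the required one.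

Conversely, let `F` be perfect and let `H n` be a chain of proper subgroups covering `ι → F`.
Call `S ⊆ ι` light if the subproduct `F^S` lies in some `H n`. A subgroup of `F^S` containing the
constants and normalised by `F^S` contains all commutators of indicator functions, hence (as `F`
is perfect and finite) all of `F^S`. So for a heavy `S` and every `n` there are `u, w ∈ F^S` with
`w ∈ H ν`, `⁅u, w⁆ ∉ H ν` for some `ν ≥ n`. Gluing the `u`'s of infinitely many disjoint heavy sets
into one element of some `H N` contradicts this. Such sets exist because each heavy `S` splits
into two heavy parts: otherwise every `x ∈ F^S` is constant on `S` off a light set, which forces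
light subsets of `S` to reach arbitrarily high levels `H k`; disjoint such pieces are then
collected into two disjoint heavy unions.
-/

open Set Function
open scoped commutatorElement

def IsUnionOfProperSubgroupChain (G : Type*) [Group G] : Prop :=
  ∃ H : ℕ → Subgroup G, Monotone H ∧ (∀ n, H n ≠ ⊤) ∧ ∀ g : G, ∃ n, g ∈ H n

section Supported

variable {ι F : Type*} [Group F]

def supportedSubgroup (F : Type*) [Group F] (S : Set ι) : Subgroup (ι → F) :=
  Subgroup.pi Sᶜ fun _ => ⊥

variable {S T : Set ι} {x : ι → F}

theorem mem_supportedSubgroup : x ∈ supportedSubgroup F S ↔ ∀ i ∉ S, x i = 1 := by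
  simp [supportedSubgroup, Subgroup.mem_pi]

theorem supportedSubgroup_mono (h : S ⊆ T) : supportedSubgroup F S ≤ supportedSubgroup F T :=
  fun _ hx => mem_supportedSubgroup.2 fun i hi => mem_supportedSubgroup.1 hx i (notMem_subset h hi)

theorem supportedSubgroup_univ : supportedSubgroup F (univ : Set ι) = ⊤ :=
  eq_top_iff.2 fun _ _ => mem_supportedSubgroup.2 fun i hi => (hi (mem_univ i)).elim

theorem supportedSubgroup_empty : supportedSubgroup F (∅ : Set ι) = ⊥ :=
  eq_bot_iff.2 fun _ hx => funext fun i => mem_supportedSubgroup.1 hx i (notMem_empty i)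

theorem mulIndicator_mem_supportedSubgroup (S : Set ι) (f : ι → F) :
    S.mulIndicator f ∈ supportedSubgroup F S :=
  mem_supportedSubgroup.2 fun _ hi => mulIndicator_of_notMem hi f

theorem supportedSubgroup_union_le :
    supportedSubgroup F (S ∪ T) ≤ supportedSubgroup F S ⊔ supportedSubgroup F T := by
  intro x hx
  rw [← mulIndicator_self_mul_compl S x]
  refine Subgroup.mul_mem_sup (mulIndicator_mem_supportedSubgroup S x) ?_
  refine mem_supportedSubgroup.2 fun i hiT => ?_
  by_cases hiS : i ∈ S
  · simp [hiS]
  · simp [hiS, mem_supportedSubgroup.1 hx i (by simp [hiS, hiT])]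

theorem commutatorElement_eq_of_eqOn {y w : ι → F} (hw : w ∈ supportedSubgroup F S)
    (hxy : EqOn x y S) : ⁅x, w⁆ = ⁅y, w⁆ := by
  funext i
  by_cases hi : i ∈ S
  · simp [commutatorElement_def, hxy hi]
  · simp [commutatorElement_def, mem_supportedSubgroup.1 hw i hi]

theorem supportedSubgroup_le_of_mulIndicator_const_mem [Finite F] {D : Subgroup (ι → F)}
    (hD : ∀ T ⊆ S, ∀ c : F, T.mulIndicator (fun _ => c) ∈ D) : supportedSubgroup F S ≤ D := by
  classical
  have : Fintype F := Fintype.ofFinite F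
  suffices key : ∀ (s : Finset F), ∀ T ⊆ S, ∀ x ∈ supportedSubgroup F T, (∀ i ∈ T, x i ∈ s) → x ∈ D
    from fun x hx => key Finset.univ S subset_rfl x hx fun _ _ => Finset.mem_univ _
  intro s
  induction s using Finset.induction_on with
  | empty =>
    intro T _ x hx hval
    have hx1 : x = 1 := funext fun i =>
      mem_supportedSubgroup.1 hx i fun hi => Finset.notMem_empty _ (hval i hi)
    exact hx1 ▸ D.one_mem
  | insert c s _ ih =>
    intro T hTS x hx hval
    have hsplit : x = (T ∩ {i | x i = c}).mulIndicator (fun _ => c) *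
        (T \ {i | x i = c}).mulIndicator x := by
      funext i
      by_cases hiT : i ∈ T
      · by_cases hic : x i = c <;> simp [hiT, hic]
      · simp [hiT, mem_supportedSubgroup.1 hx i hiT]
    rw [hsplit]
    refine D.mul_mem (hD _ (inter_subset_left.trans hTS) c) (ih _ (sdiff_subset.trans hTS) _
      (mulIndicator_mem_supportedSubgroup _ _) fun i hi => ?_)
    rw [mulIndicator_of_mem hi]
    exact (Finset.mem_insert.1 (hval i hi.1)).resolve_left hi.2

theorem mulIndicator_const_mem_of_commutator_eq_top (hF : commutator F = ⊤)
    {D : Subgroup (ι → F)} (hconst : ∀ c : F, S.mulIndicator (fun _ => c) ∈ D)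
    (hconj : ∀ u ∈ supportedSubgroup F S, ∀ w ∈ D, u * w * u⁻¹ ∈ D) {T : Set ι} (hTS : T ⊆ S)
    (c : F) : T.mulIndicator (fun _ => c) ∈ D := by
  have hc : c ∈ Subgroup.closure (commutatorSet F) := commutator_eq_closure F ▸ hF ▸ trivial
  induction hc using Subgroup.closure_induction with
  | mem _ h =>
    obtain ⟨a, b, rfl⟩ := h
    have : T.mulIndicator (fun _ => ⁅a, b⁆) =
        ⁅T.mulIndicator (fun _ => a), S.mulIndicator (fun _ => b)⁆ := by
      funext i
      by_cases hiT : i ∈ T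
      · simp [hiT, hTS hiT, commutatorElement_def]
      · simp [hiT, commutatorElement_def]
    rw [this, commutatorElement_def]
    exact D.mul_mem
      (hconj _ (supportedSubgroup_mono hTS (mulIndicator_mem_supportedSubgroup _ _)) _ (hconst b))
      (D.inv_mem (hconst b))
  | one => exact (mulIndicator_one F T).symm ▸ D.one_mem
  | mul a b _ _ ha hb =>
    rw [show (fun _ : ι => a * b) = (fun _ => a) * (fun _ => b) from rfl, mulIndicator_mul']
    exact D.mul_mem ha hb
  | inv a _ ha =>
    rw [show (fun _ : ι => a⁻¹) = (fun _ => a)⁻¹ from rfl, mulIndicator_inv']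
    exact D.inv_mem ha

theorem supportedSubgroup_le_of_commutator_eq_top [Finite F] (hF : commutator F = ⊤)
    {D : Subgroup (ι → F)} (hconst : ∀ c : F, S.mulIndicator (fun _ => c) ∈ D)
    (hconj : ∀ u ∈ supportedSubgroup F S, ∀ w ∈ D, u * w * u⁻¹ ∈ D) :
    supportedSubgroup F S ≤ D :=
  supportedSubgroup_le_of_mulIndicator_const_mem fun _ hTS =>
    mulIndicator_const_mem_of_commutator_eq_top hF hconst hconj hTS

end Supported

theorem exists_pairwise_disjoint_of_forall_exists {α : Type*} {P : Set α → Prop}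
    {Q : ℕ → Set α → Prop} (h0 : P ∅)
    (hstep : ∀ W, P W → ∀ k, ∃ L, Disjoint L W ∧ P (W ∪ L) ∧ Q k L) :
    ∃ L : ℕ → Set α, Pairwise (Disjoint on L) ∧ ∀ k, Q k (L k) := by
  choose! next hdisj hP hQ using hstep
  -- `W k` is the union of the first `k` chosen sets.
  let W : ℕ → Set α := fun k => Nat.rec ∅ (fun k Wk => Wk ∪ next Wk k) k
  have hW : ∀ k, P (W k) := by
    intro k
    induction k with
    | zero => exact h0
    | succ k ih => exact hP _ ih k
  have hWmono : Monotone W := monotone_nat_of_le_succ fun _ => subset_union_left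
  refine ⟨fun k => next (W k) k, (pairwise_disjoint_on _).2 fun j k hjk => ?_,
    fun k => hQ _ (hW k) k⟩
  exact ((hdisj _ (hW k) k).mono_right
    ((subset_union_right : next (W j) j ⊆ W (j + 1)).trans (hWmono hjk))).symm

section Chain

variable {ι F : Type*} [Group F] {H : ℕ → Subgroup (ι → F)} {S T W : Set ι}

def IsLight (H : ℕ → Subgroup (ι → F)) (S : Set ι) : Prop :=
  ∃ n, supportedSubgroup F S ≤ H n

theorem IsLight.mono (h : S ⊆ T) (hT : IsLight H T) : IsLight H S :=
  let ⟨n, hn⟩ := hT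
  ⟨n, (supportedSubgroup_mono h).trans hn⟩

theorem IsLight.union (hmono : Monotone H) (hS : IsLight H S) (hT : IsLight H T) :
    IsLight H (S ∪ T) :=
  let ⟨n, hn⟩ := hS
  let ⟨m, hm⟩ := hT
  ⟨max n m, supportedSubgroup_union_le.trans <|
    sup_le (hn.trans (hmono (le_max_left n m))) (hm.trans (hmono (le_max_right n m)))⟩

theorem isLight_empty : IsLight H (∅ : Set ι) :=
  ⟨0, supportedSubgroup_empty.trans_le bot_le⟩

theorem isLight_biUnion (hmono : Monotone H) {κ : Type*} (s : Finset κ) {A : κ → Set ι}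
    (h : ∀ k ∈ s, IsLight H (A k)) : IsLight H (⋃ k ∈ s, A k) := by
  classical
  induction s using Finset.induction_on with
  | empty => simpa using isLight_empty
  | insert k s _ ih =>
    rw [Finset.set_biUnion_insert]
    exact (h k (Finset.mem_insert_self k s)).union hmono
      (ih fun j hj => h j (Finset.mem_insert_of_mem hj))

theorem not_isLight_univ (hproper : ∀ n, H n ≠ ⊤) : ¬ IsLight H univ :=
  fun ⟨n, hn⟩ => hproper n (eq_top_iff.2 (supportedSubgroup_univ (F := F) ▸ hn))

theorem not_isLight_iUnion (hmono : Monotone H) {L : ℕ → Set ι}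
    (hL : ∀ k, ¬ supportedSubgroup F (L k) ≤ H k) {f : ℕ → ℕ} (hf : ∀ k, k ≤ f k) :
    ¬ IsLight H (⋃ k, L (f k)) := fun ⟨m, hm⟩ =>
  hL (f m) <| ((supportedSubgroup_mono (subset_iUnion (fun k => L (f k)) m)).trans hm).trans
    (hmono (hf m))

theorem exists_forall_mem_of_finite (hmono : Monotone H) (hcover : ∀ g, ∃ n, g ∈ H n)
    {κ : Type*} [Finite κ] (g : κ → ι → F) : ∃ M, ∀ k, g k ∈ H M :=
  (Filter.eventually_all.2 fun k =>
    let ⟨n, hn⟩ := hcover (g k)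
    Filter.eventually_atTop.2 ⟨n, fun _ hm => hmono hm hn⟩).exists

theorem exists_commutatorElement_notMem [Finite F] (hF : commutator F = ⊤) (hmono : Monotone H)
    (hcover : ∀ g, ∃ n, g ∈ H n) (hS : ¬ IsLight H S) (n : ℕ) :
    ∃ ν ≥ n, ∃ u ∈ supportedSubgroup F S, ∃ w ∈ supportedSubgroup F S, w ∈ H ν ∧ ⁅u, w⁆ ∉ H ν := by
  obtain ⟨M, hM⟩ :=
    exists_forall_mem_of_finite hmono hcover fun c : F => S.mulIndicator fun _ => c
  by_contra! hcomm
  refine hS ⟨max n M, le_trans (b := H (max n M) ⊓ supportedSubgroup F S) ?_ inf_le_left⟩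
  refine supportedSubgroup_le_of_commutator_eq_top hF
    (fun c => ⟨hmono (le_max_right n M) (hM c), mulIndicator_mem_supportedSubgroup _ _⟩) ?_
  rintro u hu w ⟨hwH, hwS⟩
  refine ⟨?_, (supportedSubgroup F S).mul_mem ((supportedSubgroup F S).mul_mem hu hwS)
    ((supportedSubgroup F S).inv_mem hu)⟩
  rw [show u * w * u⁻¹ = ⁅u, w⁆ * w by group]
  exact mul_mem (hcomm _ (le_max_left n M) u hu w hwS hwH) hwH

theorem exists_isLight_of_pairwise_disjoint [Finite F] (hF : commutator F = ⊤)
    (hmono : Monotone H) (hcover : ∀ g, ∃ n, g ∈ H n) {S : ℕ → Set ι}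
    (hS : Pairwise (Disjoint on S)) : ∃ k, IsLight H (S k) := by
  classical
  by_contra! hheavy
  choose ν hν u hu w hw hwH hcomm using fun k =>
    exists_commutatorElement_notMem hF hmono hcover (hheavy k) k
  let g : ι → F := fun i => if h : ∃ k, i ∈ S k then u h.choose i else 1
  have hg : ∀ k, EqOn g (u k) (S k) := by
    intro k i hi
    have hex : ∃ k, i ∈ S k := ⟨k, hi⟩
    have hk : hex.choose = k := by_contra fun hne => disjoint_left.1 (hS hne) hex.choose_spec hi
    simp only [g, dif_pos hex, hk]
  obtain ⟨N, hN⟩ := hcover g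
  have hgN : g ∈ H (ν N) := hmono (hν N) hN
  apply hcomm N
  rw [← commutatorElement_eq_of_eqOn (hw N) (hg N), commutatorElement_def]
  exact mul_mem (mul_mem (mul_mem hgN (hwH N)) (inv_mem hgN)) (inv_mem (hwH N))

theorem exists_isLight_subset_not_le [Finite F] (hmono : Monotone H)
    (hcover : ∀ g, ∃ n, g ∈ H n) (hS : ¬ IsLight H S)
    (hatom : ∀ T ⊆ S, ¬ IsLight H T → IsLight H (S \ T)) (m : ℕ) :
    ∃ T ⊆ S, IsLight H T ∧ ¬ supportedSubgroup F T ≤ H m := by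
  classical
  have : Fintype F := Fintype.ofFinite F
  by_contra! hbound
  obtain ⟨M, hM⟩ :=
    exists_forall_mem_of_finite hmono hcover fun c : F => S.mulIndicator fun _ => c
  refine hS ⟨max m M, fun x hx => ?_⟩
  obtain ⟨c, hc⟩ : ∃ c : F, ¬ IsLight H (S ∩ {i | x i = c}) := by
    by_contra! hlight
    exact hS ((isLight_biUnion hmono Finset.univ fun c _ => hlight c).mono fun i hi => by simp [hi])
  have hrest : (S.mulIndicator fun _ => c)⁻¹ * x ∈
      supportedSubgroup F (S \ (S ∩ {i | x i = c})) := by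
    refine mem_supportedSubgroup.2 fun i hi => ?_
    by_cases hiS : i ∈ S
    · have hxi : x i = c := by_contra fun h => hi ⟨hiS, fun h' => h h'.2⟩
      simp [hiS, hxi]
    · simp [hiS, mem_supportedSubgroup.1 hx i hiS]
  have hmem := mul_mem (hmono (le_max_right m M) (hM c))
    (hmono (le_max_left m M) (hbound _ sdiff_subset (hatom _ inter_subset_left hc) hrest))
  rwa [mul_inv_cancel_left] at hmem

theorem exists_disjoint_subset_not_le [Finite F] (hmono : Monotone H)
    (hcover : ∀ g, ∃ n, g ∈ H n) (hS : ¬ IsLight H S)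
    (hatom : ∀ T ⊆ S, ¬ IsLight H T → IsLight H (S \ T)) (hW : IsLight H W) (k : ℕ) :
    ∃ L, Disjoint L W ∧ IsLight H (W ∪ L) ∧ L ⊆ S ∧ ¬ supportedSubgroup F L ≤ H k := by
  obtain ⟨m, hm⟩ := hW
  obtain ⟨T, hTS, hT, hTm⟩ := exists_isLight_subset_not_le hmono hcover hS hatom (max k m)
  refine ⟨T \ W, disjoint_sdiff_left, IsLight.union hmono ⟨m, hm⟩ (hT.mono sdiff_subset),
    sdiff_subset.trans hTS, fun hL => hTm ?_⟩
  calc supportedSubgroup F T ≤ supportedSubgroup F (T \ W ∪ W) :=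
        supportedSubgroup_mono (subset_sdiff_union T W)
    _ ≤ supportedSubgroup F (T \ W) ⊔ supportedSubgroup F W := supportedSubgroup_union_le
    _ ≤ H (max k m) :=
        sup_le (hL.trans (hmono (le_max_left k m))) (hm.trans (hmono (le_max_right k m)))

theorem exists_not_isLight_diff [Finite F] (hmono : Monotone H) (hcover : ∀ g, ∃ n, g ∈ H n)
    (hS : ¬ IsLight H S) : ∃ T ⊆ S, ¬ IsLight H T ∧ ¬ IsLight H (S \ T) := by
  by_contra! hatom
  obtain ⟨L, hdisj, hL⟩ := exists_pairwise_disjoint_of_forall_exists (P := IsLight H)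
    (Q := fun k L => L ⊆ S ∧ ¬ supportedSubgroup F L ≤ H k) isLight_empty
    fun W hW k => exists_disjoint_subset_not_le hmono hcover hS hatom hW k
  have heven := not_isLight_iUnion hmono (fun k => (hL k).2) (f := (2 * ·)) (by omega)
  have hodd := not_isLight_iUnion hmono (fun k => (hL k).2) (f := (2 * · + 1)) (by omega)
  refine hodd ((hatom _ (iUnion_subset fun k => (hL _).1) heven).mono fun i hi => ?_)
  obtain ⟨k, hk⟩ := mem_iUnion.1 hi
  refine ⟨(hL _).1 hk, fun h => ?_⟩
  obtain ⟨j, hj⟩ := mem_iUnion.1 h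
  exact disjoint_left.1 (hdisj (by omega : 2 * k + 1 ≠ 2 * j)) hk hj

end Chain

theorem not_isUnionOfProperSubgroupChain_pi {ι F : Type*} [Group F] [Finite F]
    (hF : commutator F = ⊤) : ¬ IsUnionOfProperSubgroupChain (ι → F) := by
  rintro ⟨H, hmono, hproper, hcover⟩
  have hstep : ∀ W : Set ι, ¬ IsLight H Wᶜ → ℕ →
      ∃ L, Disjoint L W ∧ ¬ IsLight H (W ∪ L)ᶜ ∧ ¬ IsLight H L := by
    intro W hW _
    obtain ⟨T, hTW, hT, hWT⟩ := exists_not_isLight_diff hmono hcover hW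
    refine ⟨T, subset_compl_iff_disjoint_right.1 hTW, ?_, hT⟩
    rwa [compl_union, ← sdiff_eq]
  obtain ⟨L, hdisj, hL⟩ := exists_pairwise_disjoint_of_forall_exists (Q := fun _ L => ¬ IsLight H L)
    (by simpa using not_isLight_univ hproper) hstep
  obtain ⟨k, hk⟩ := exists_isLight_of_pairwise_disjoint hF hmono hcover hdisj
  exact hL k hk

theorem IsUnionOfProperSubgroupChain.of_surjective {G G' : Type*} [Group G] [Group G']
    (h : IsUnionOfProperSubgroupChain G') (f : G →* G') (hf : Surjective f) :
    IsUnionOfProperSubgroupChain G := by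
  obtain ⟨H, hmono, hproper, hcover⟩ := h
  refine ⟨fun n => (H n).comap f, fun m n hmn => Subgroup.comap_mono (hmono hmn),
    fun n htop => hproper n ?_, fun g => hcover (f g)⟩
  change (H n).comap f = ⊤ at htop
  rw [← Subgroup.map_comap_eq_self_of_surjective hf (H n), htop, ← MonoidHom.range_eq_map,
    MonoidHom.range_eq_top.2 hf]

theorem isUnionOfProperSubgroupChain_multiplicative_finsupp (R : Type*) [Ring R] [Nontrivial R] :
    IsUnionOfProperSubgroupChain (Multiplicative (ℕ →₀ R)) := by
  refine ⟨fun n => AddSubgroup.toSubgroup (Finsupp.supported R R (Iio n)).toAddSubgroup,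
    fun m n hmn => ?_, fun n htop => ?_, fun f => ?_⟩
  · exact AddSubgroup.toSubgroup.monotone
      (Finsupp.supported_mono (M := R) (R := R) (Iio_subset_Iio hmn))
  · have : Multiplicative.ofAdd (Finsupp.single n (1 : R)) ∈ _ := htop ▸ Subgroup.mem_top _
    simp [Finsupp.mem_supported] at this
  · obtain ⟨n, hn⟩ := (Multiplicative.toAdd f).support.exists_nat_subset_range
    refine ⟨n, ?_⟩
    rw [Multiplicative.mem_toSubgroup, Submodule.mem_toAddSubgroup, Finsupp.mem_supported,
      ← Finset.coe_range]
    exact_mod_cast hn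

theorem exists_surjective_multiplicative_zmod {G : Type*} [Group G] [Finite G]
    (hG : commutator G ≠ ⊤) :
    ∃ p, p.Prime ∧ ∃ χ : G →* Multiplicative (ZMod p), Surjective χ := by
  obtain ⟨κ, _, n, hn, ⟨e⟩⟩ :=
    CommGroup.equiv_prod_multiplicative_zmod_of_finite (Abelianization G)
  obtain ⟨k⟩ : Nonempty κ := by
    by_contra! hκ
    refine hG (Abelianization.ker_of (G := G) ▸ eq_top_iff.2 fun x _ => e.injective ?_)
    exact funext fun k => (hκ.false k).elim
  let π : ZMod (n k) →+* ZMod (n k).minFac := ZMod.castHom (Nat.minFac_dvd (n k)) _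
  refine ⟨_, Nat.minFac_prime (hn k).ne', π.toAddMonoidHom.toMultiplicative.comp
    ((Pi.evalMonoidHom _ k).comp (e.toMonoidHom.comp Abelianization.of)), ?_⟩
  exact (Multiplicative.ofAdd.surjective.comp
      ((ZMod.ringHom_surjective π).comp Multiplicative.toAdd.surjective)).comp
    ((surjective_eval k).comp (e.surjective.comp QuotientGroup.mk_surjective))

theorem isUnionOfProperSubgroupChain_pi_nat {F : Type*} [Group F] [Finite F]
    (hF : commutator F ≠ ⊤) : IsUnionOfProperSubgroupChain (ℕ → F) := by
  obtain ⟨p, hp, χ, hχ⟩ := exists_surjective_multiplicative_zmod hF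
  have := Fact.mk hp
  obtain ⟨ψ, hψ⟩ : ∃ ψ : (ℕ → ZMod p) →ₗ[ZMod p] ℕ →₀ ZMod p, Surjective ψ :=
    let ⟨ψ, hψ⟩ := (Finsupp.lcoeFun (R := ZMod p)).exists_leftInverse_of_injective
      (LinearMap.ker_eq_bot.2 DFunLike.coe_injective)
    ⟨ψ, fun f => ⟨f, LinearMap.congr_fun hψ f⟩⟩
  refine (isUnionOfProperSubgroupChain_multiplicative_finsupp (ZMod p)).of_surjective
    (ψ.toAddMonoidHom.toMultiplicative.comp <|
      (MulEquiv.piMultiplicative _).symm.toMonoidHom.comp <| MonoidHom.compLeft χ ℕ) ?_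
  exact (Multiplicative.ofAdd.surjective.comp (hψ.comp Multiplicative.toAdd.surjective)).comp
    ((MulEquiv.piMultiplicative _).symm.surjective.comp hχ.comp_left)

theorem stmt_0_general (F : Type*) [Group F] [Finite F] :
    (¬ ∃ H : ℕ → Subgroup (ℕ → F),
        Monotone H ∧ (∀ n, H n ≠ ⊤) ∧ ∀ g : ℕ → F, ∃ n, g ∈ H n)
      ↔ commutator F = ⊤ :=
  ⟨not_imp_comm.1 isUnionOfProperSubgroupChain_pi_nat, not_isUnionOfProperSubgroupChain_pi⟩

/-- **Koppelberg–Tits.** Let `F` be a nontrivial finite group and `G n = F` for all `n`.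
Then the full direct product `∏ n, F` cannot be written as the union of a countable
increasing chain of proper subgroups iff `F` is perfect. -/
theorem stmt_0 (F : Type*) [Group F] [Finite F] [Nontrivial F] :
    (¬ ∃ H : ℕ → Subgroup (ℕ → F),
        Monotone H ∧ (∀ n, H n ≠ ⊤) ∧ ∀ g : ℕ → F, ∃ n, g ∈ H n)
      ↔ commutator F = ⊤ :=
  stmt_0_general F
end

section
/- Suppose that G is a group that is not finitely generated, H is a subgroup of G, and G is finitely generated over H, i.e., there exists a finite subset S of G such that G is generated by H ∪ S. Then c(H) ≤ c(G): for every cardinal λ, if G can be written as the union of an increasing chain, indexed by the ordinals below λ, of proper subgroups, then H can also be written as the union of an increasing chain, indexed by the ordinals below λ, of proper subgroups. -/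
/-!
A covering chain `(K i)` of `G` by proper subgroups eventually contains the finite set `S`,
say from index `j` on. The traces `K (i ⊔ j) ∩ H` then form a covering chain of `H`, and they
are proper: if `H ≤ K (i ⊔ j)`, then `K (i ⊔ j)` contains `H ∪ S`, which generates `G`.
-/

namespace Subgroup

variable {G ι : Type*} [Group G]

theorem exists_finset_subset_of_monotone_cover [Preorder ι] [IsDirectedOrder ι]
    {K : ι → Subgroup G} (hK : Monotone K) (hcov : ∀ g, ∃ i, g ∈ K i) (S : Finset G) :
    ∃ j, (S : Set G) ⊆ K j := by
  classical
  choose f hf using hcov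
  have : Nonempty ι := ⟨f 1⟩
  obtain ⟨j, hj⟩ := (S.image f).exists_le
  exact ⟨j, fun s hs => hK (hj _ (Finset.mem_image_of_mem f hs)) (hf s)⟩

theorem subgroupOf_ne_top_of_closure_union_eq_top {H K : Subgroup G} {S : Set G}
    (hS : closure ((H : Set G) ∪ S) = ⊤) (hSK : S ⊆ K) (hK : K ≠ ⊤) : K.subgroupOf H ≠ ⊤ := by
  rw [Ne, subgroupOf_eq_top]
  intro hHK
  apply hK
  rw [eq_top_iff, ← hS, closure_le]
  exact Set.union_subset hHK hSK

theorem exists_monotone_cover_of_closure_union_eq_top [SemilatticeSup ι]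
    {H : Subgroup G} {S : Finset G} (hS : closure ((H : Set G) ∪ S) = ⊤)
    {K : ι → Subgroup G} (hK : Monotone K) (hproper : ∀ i, K i ≠ ⊤) (hcov : ∀ g, ∃ i, g ∈ K i) :
    ∃ L : ι → Subgroup H, Monotone L ∧ (∀ i, L i ≠ ⊤) ∧ ∀ x : H, ∃ i, x ∈ L i := by
  obtain ⟨j, hSj⟩ := exists_finset_subset_of_monotone_cover hK hcov S
  refine ⟨fun i => (K (i ⊔ j)).subgroupOf H, fun a b hab => ?_, fun i => ?_, fun x => ?_⟩
  · exact subgroupOf_mono H (hK (sup_le_sup_right hab j))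
  · exact subgroupOf_ne_top_of_closure_union_eq_top hS (hSj.trans (hK le_sup_right)) (hproper _)
  · obtain ⟨i, hi⟩ := hcov x
    exact ⟨i, mem_subgroupOf.2 (hK le_sup_left hi)⟩

end Subgroup

theorem stmt_5_general {G : Type*} [Group G] (H : Subgroup G)
    (hfg : ∃ S : Finset G, Subgroup.closure ((H : Set G) ∪ (S : Set G)) = ⊤)
    (lam : Cardinal)
    (h : ∃ K : Set.Iio lam.ord → Subgroup G,
        Monotone K ∧ (∀ i, K i ≠ ⊤) ∧ ∀ g : G, ∃ i, g ∈ K i) :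
    ∃ L : Set.Iio lam.ord → Subgroup ↥H,
        Monotone L ∧ (∀ i, L i ≠ ⊤) ∧ ∀ x : ↥H, ∃ i, x ∈ L i := by
  obtain ⟨S, hS⟩ := hfg
  obtain ⟨K, hK, hproper, hcov⟩ := h
  exact Subgroup.exists_monotone_cover_of_closure_union_eq_top hS hK hproper hcov

/-- If `G` is not finitely generated, `H ≤ G` and `G` is finitely generated over `H`,
then `c(H) ≤ c(G)`: any covering chain of proper subgroups of `G` indexed by the
ordinals below `λ` yields one for `H`. -/
theorem stmt_5 {G : Type*} [Group G] (H : Subgroup G) (hG : ¬ Group.FG G)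
    (hfg : ∃ S : Finset G, Subgroup.closure ((H : Set G) ∪ (S : Set G)) = ⊤)
    (lam : Cardinal)
    (h : ∃ K : Set.Iio lam.ord → Subgroup G,
        Monotone K ∧ (∀ i, K i ≠ ⊤) ∧ ∀ g : G, ∃ i, g ∈ K i) :
    ∃ L : Set.Iio lam.ord → Subgroup ↥H,
        Monotone L ∧ (∀ i, L i ≠ ⊤) ∧ ∀ x : ↥H, ∃ i, x ∈ L i :=
  stmt_5_general H hfg lam h
end

section
/- Let (S_n)_{n∈ℕ} be a sequence of nontrivial finite perfect groups, and suppose there exists a finite set F of groups such that every S_n is isomorphic to a member of F. Then c(∏_{n∈ℕ} S_n) > ω; that is, the full direct product ∏_n S_n cannot be written as the union of a countable increasing chain of proper subgroups. -/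
/-!
Following Koppelberg and Tits, the statement is reduced to one about Boolean algebras. Let `P` be
the (finite, perfect) product of the finitely many isomorphism types and `φ : P →* ∏ Sₙ` the
diagonal map. For a subgroup `H ⊇ φ(P)`, the sets `A` such that `H` contains every `φ p` cut off
outside `A` form a Boolean subalgebra of `Set ℕ`; intersections are handled by
`1_{A ∩ B} ⁅g, h⁆ = ⁅1_A g, 1_B h⁆` and perfectness of `P`. Every element of `∏ Sₙ` is a finite
product of such cut-off elements, so a countable chain of proper subgroups covering `∏ Sₙ` would
give a countable chain of proper Boolean subalgebras covering `Set ℕ`.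

No such chain exists: a proper subalgebra fails to separate some two distinct ultrafilters, and
for every sequence of pairs of distinct ultrafilters one set separates infinitely many pairs.
For the latter, pass to a subsequence along which the first ultrafilters have disjoint
representatives; this reduces to pairs `(pure k, r k)`, which are separated by the preimage of an
infinite set `T` of indices that a fixed-point-free map sends outside `T`.
-/

section

open Set Filter Function
open scoped commutatorElement

variable {α : Type*}

theorem Ultrafilter.map_eq_pure_iff {β : Type*} {u : Ultrafilter α} {c : α → β} {b : β} :
    u.map c = pure b ↔ c ⁻¹' {b} ∈ u :=
  ⟨fun h => mem_map.1 (h ▸ mem_pure.2 rfl), fun h => eq_of_le (le_pure_iff.2 h)⟩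

theorem Ultrafilter.exists_mem_notMem_of_ne {p q : Ultrafilter α} (h : p ≠ q) :
    ∃ s ∈ p, s ∉ q := by
  by_contra! hc
  exact h (Ultrafilter.eq_of_le fun s hs => hc s hs).symm

theorem Ultrafilter.compl_singleton_mem_of_ne_pure {u : Ultrafilter α} {a : α} (h : u ≠ pure a) :
    {a}ᶜ ∈ u :=
  compl_mem_iff_notMem.2 fun ha => h (eq_of_le (le_pure_iff.2 ha))

theorem Set.Infinite.exists_infinite_subset_notMem {s : Set α} (hs : s.Infinite)
    (R : Ultrafilter α) : ∃ t ⊆ s, t.Infinite ∧ t ∉ R := by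
  let e := hs.natEmbedding
  have hinf : ∀ a, (range fun n => (e (2 * n + a) : α)).Infinite := fun a =>
    infinite_range_of_injective fun m n h => by simpa using e.injective (Subtype.ext h)
  have hdisj : Disjoint (range fun n => (e (2 * n) : α)) (range fun n => (e (2 * n + 1) : α)) := by
    refine disjoint_left.2 ?_
    rintro _ ⟨m, rfl⟩ ⟨n, hn⟩
    have := e.injective (Subtype.ext hn)
    omega
  have hsub : ∀ a, (range fun n => (e (2 * n + a) : α)) ⊆ s := by
    rintro a _ ⟨n, rfl⟩; exact (e _).2
  by_cases h : (range fun n => (e (2 * n) : α)) ∈ R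
  · exact ⟨_, hsub 1, hinf 1, fun h' => R.empty_notMem (hdisj.inter_eq ▸ inter_mem h h')⟩
  · exact ⟨_, hsub 0, hinf 0, h⟩

theorem Ultrafilter.exists_injective_map_eq_pure (u : ℕ → Ultrafilter α)
    (hu : ∀ v, (u ⁻¹' {v}).Finite) :
    ∃ σ : ℕ → ℕ, Injective σ ∧ ∃ c : α → ℕ, ∀ k, (u (σ k)).map c = pure k := by
  classical
  set W := hyperfilter ℕ
  set v := W.bind u
  have hZ : ∀ n, ∃ Z ∈ u n, u n ≠ v → Z ∉ v := fun n => by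
    by_cases h : u n = v
    · exact ⟨univ, univ_mem, fun h' => (h' h).elim⟩
    · obtain ⟨Z, hZ, hZv⟩ := exists_mem_notMem_of_ne h
      exact ⟨Z, hZ, fun _ => hZv⟩
  choose Z hZu hZv using hZ
  obtain ⟨σ, -, hσ⟩ := exists_seq_of_forall_finset_exists (fun n => u n ≠ v)
    (fun m n => m ≠ n ∧ Z m ∉ u n) fun s hs => by
      have hv : ∀ᶠ n in (W : Filter ℕ), u n ≠ v := (hu v).compl_mem_hyperfilter
      have hs' : ∀ᶠ n in (W : Filter ℕ), n ∉ s := s.finite_toSet.compl_mem_hyperfilter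
      -- `Z m ∉ v` means that `W`-almost every `u n` avoids `Z m`
      have hZ : ∀ m ∈ s, ∀ᶠ n in (W : Filter ℕ), Z m ∉ u n := fun m hm =>
        compl_mem_iff_notMem.2 (hZv m (hs m hm))
      obtain ⟨n, hnv, hns, hnZ⟩ := (hv.and (hs'.and ((eventually_all_finset s).2 hZ))).exists
      exact ⟨n, hnv, fun m hm => ⟨ne_of_mem_of_not_mem hm hns, hnZ m hm⟩⟩
  refine ⟨σ, Injective.of_lt_imp_ne fun m n h => (hσ m n h).1, fun x =>
    if h : ∃ k, x ∈ Z (σ k) then Nat.find h else 0, fun k => ?_⟩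
  refine Ultrafilter.eq_of_le (le_pure_iff.2 ?_)
  have : ∀ᶠ x in (u (σ k) : Filter α), x ∈ Z (σ k) ∧ ∀ j < k, x ∉ Z (σ j) :=
    Eventually.and (hZu (σ k)) ((Set.finite_lt_nat k).eventually_all.2 fun j hj =>
      compl_mem_iff_notMem.2 (hσ j k hj).2)
  refine mem_map.2 (mem_of_superset this fun x hx => ?_)
  have h : ∃ k, x ∈ Z (σ k) := ⟨k, hx.1⟩
  simp only [mem_preimage, mem_singleton_iff, dif_pos h, Nat.find_eq_iff]
  exact hx

theorem exists_infinite_mapsTo_compl {β : Type*} [Infinite β] (g : β → β) (hg : ∀ b, g b ≠ b) :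
    ∃ T : Set β, T.Infinite ∧ MapsTo g T Tᶜ := by
  by_cases h : ∃ a, (g ⁻¹' {a}).Infinite
  · obtain ⟨a, ha⟩ := h
    exact ⟨g ⁻¹' {a} \ {a}, ha.sdiff (finite_singleton a), fun b hb hgb => hgb.2 hb.1⟩
  simp only [not_exists, not_infinite] at h
  obtain ⟨f, -, hf⟩ := exists_seq_of_forall_finset_exists (fun _ => True)
    (fun a b => a ≠ b ∧ g a ≠ b ∧ g b ≠ a) fun s _ => by
      have hfin : ((s : Set β) ∪ g '' s ∪ g ⁻¹' s).Finite :=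
        (s.finite_toSet.union (s.finite_toSet.image g)).union
          (s.finite_toSet.preimage' fun b _ => h b)
      obtain ⟨b, hb⟩ := hfin.infinite_compl.nonempty
      simp only [mem_compl_iff, mem_union, mem_image, mem_preimage, not_or] at hb
      exact ⟨b, trivial, fun a ha => ⟨fun hab => hb.1.1 (hab ▸ ha),
        fun hab => hb.1.2 ⟨a, ha, hab⟩, fun hab => hb.2 (hab ▸ ha)⟩⟩
  refine ⟨range f, infinite_range_of_injective (Injective.of_lt_imp_ne fun m n h => (hf m n h).1),
    ?_⟩
  rintro _ ⟨n, rfl⟩ ⟨m, hm⟩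
  rcases lt_trichotomy m n with h | rfl | h
  · exact (hf m n h).2.2 hm.symm
  · exact hg _ hm.symm
  · exact (hf n m h).2.1 hm.symm

theorem Ultrafilter.exists_set_separating_infinitely_many_pure (r : ℕ → Ultrafilter α) (f : ℕ → α)
    (hf : Injective f) (hr : ∀ k, r k ≠ pure (f k)) :
    ∃ s : Set α, {k | ¬(f k ∈ s ↔ s ∈ r k)}.Infinite := by
  by_cases h : ∃ R, (r ⁻¹' {R}).Infinite
  · obtain ⟨R, hR⟩ := h
    obtain ⟨t, hts, ht, htR⟩ := (hR.image hf.injOn).exists_infinite_subset_notMem R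
    refine ⟨tᶜ, (ht.preimage (hts.trans (image_subset_range _ _))).mono fun k hk => ?_⟩
    obtain ⟨k', hk', hfk⟩ := hts hk
    rw [hf hfk] at hk'
    show ¬(f k ∈ tᶜ ↔ tᶜ ∈ r k)
    rw [(hk' : r k = R), compl_mem_iff_notMem]
    exact fun h => h.2 htR hk
  simp only [not_exists, not_infinite] at h
  classical
  obtain ⟨σ, hσ, c, hc⟩ := exists_injective_map_eq_pure r h
  -- move the point `f (σ k)` out of the fibre `c ⁻¹' {k}`
  let c' : α → ℕ := fun x => if x = f (σ (c x)) then c x + 1 else c x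
  have hc' : ∀ k, (r (σ k)).map c' = pure k := fun k => by
    refine map_eq_pure_iff.2 (mem_of_superset (inter_mem (map_eq_pure_iff.1 (hc k))
      (compl_singleton_mem_of_ne_pure (hr (σ k)))) fun x hx => ?_)
    simp only [mem_inter_iff, mem_preimage, mem_singleton_iff, mem_compl_iff] at hx
    simp only [mem_preimage, mem_singleton_iff, c', hx.1, if_neg hx.2]
  have hg : ∀ k, c' (f (σ k)) ≠ k := fun k => by
    by_cases hk : c (f (σ k)) = k
    · simp [c', hk]
    · have : f (σ k) ≠ f (σ (c (f (σ k)))) := fun h => hk (hσ (hf h)).symm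
      simpa [c', if_neg this] using hk
  obtain ⟨T, hT, hgT⟩ := exists_infinite_mapsTo_compl _ hg
  refine ⟨c' ⁻¹' T, (hT.image hσ.injOn).mono ?_⟩
  rintro _ ⟨k, hk, rfl⟩
  rw [mem_ofPred_eq, ← mem_map, hc', mem_pure, mem_preimage]
  exact fun h => hgT hk (h.2 hk)

theorem Ultrafilter.exists_set_separating_infinitely_many_of_finite_fibers
    (p q : ℕ → Ultrafilter α) (hpq : ∀ n, p n ≠ q n) (hp : ∀ v, (p ⁻¹' {v}).Finite) :
    ∃ s : Set α, {n | ¬(s ∈ p n ↔ s ∈ q n)}.Infinite := by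
  classical
  obtain ⟨σ, hσ, c, hc⟩ := exists_injective_map_eq_pure p hp
  choose S hSp hSq using fun n => exists_mem_notMem_of_ne (hpq n)
  let c' : α → Option ℕ := fun x => if x ∈ S (σ (c x)) then some (c x) else none
  have hc' : ∀ k, c' ⁻¹' {some k} = c ⁻¹' {k} ∩ S (σ k) := fun k => by
    ext x
    by_cases hx : x ∈ S (σ (c x)) <;> aesop
  have hc'p : ∀ k, (p (σ k)).map c' = pure (some k) := fun k =>
    map_eq_pure_iff.2 (hc' k ▸ inter_mem (map_eq_pure_iff.1 (hc k)) (hSp (σ k)))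
  have hc'q : ∀ k, (q (σ k)).map c' ≠ pure (some k) := fun k h =>
    hSq (σ k) (mem_of_superset (map_eq_pure_iff.1 h) (hc' k ▸ inter_subset_right))
  obtain ⟨s, hs⟩ := exists_set_separating_infinitely_many_pure _ _ (Option.some_injective _) hc'q
  refine ⟨c' ⁻¹' s, (hs.image hσ.injOn).mono ?_⟩
  rintro _ ⟨k, hk, rfl⟩
  rwa [mem_ofPred_eq, ← mem_map, ← mem_map, hc'p, mem_pure]

theorem Ultrafilter.exists_set_separating_infinitely_many (p q : ℕ → Ultrafilter α)
    (hpq : ∀ n, p n ≠ q n) : ∃ s : Set α, {n | ¬(s ∈ p n ↔ s ∈ q n)}.Infinite := by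
  by_cases hp : ∀ v, (p ⁻¹' {v}).Finite
  · exact exists_set_separating_infinitely_many_of_finite_fibers p q hpq hp
  push Not at hp
  obtain ⟨P, hP⟩ := hp
  let e := hP.natEmbedding
  have hpe : ∀ k, p (e k) = P := fun k => (e k).2
  have he : Injective fun k => (e k : ℕ) := Subtype.val_injective.comp e.injective
  by_cases hq : ∀ v, ((fun k => q (e k)) ⁻¹' {v}).Finite
  · obtain ⟨s, hs⟩ := exists_set_separating_infinitely_many_of_finite_fibers _ (fun k => p (e k))
      (fun k => (hpq _).symm) hq
    exact ⟨s, fun hfin => hs ((hfin.preimage he.injOn).subset fun k hk h => hk h.symm)⟩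
  push Not at hq
  obtain ⟨Q, hQ⟩ := hq
  obtain ⟨k₀, hk₀⟩ := hQ.nonempty
  have hPQ : P ≠ Q := by rw [← hpe k₀, ← (hk₀ : q (e k₀) = Q)]; exact hpq _
  obtain ⟨s, hsP, hsQ⟩ := exists_mem_notMem_of_ne hPQ
  refine ⟨s, fun hfin => hQ ((hfin.preimage he.injOn).subset fun k (hk : q (e k) = Q) => ?_)⟩
  show ¬(s ∈ p (e k) ↔ s ∈ q (e k))
  rw [hpe, hk]
  exact fun h => hsQ (h.1 hsP)

theorem BooleanSubalgebra.exists_ultrafilter_mem_forall_mem_iff (B : BooleanSubalgebra (Set α))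
    (r : Ultrafilter α) {u : Set α} (hu : ∀ a ∈ B, a ∈ r → (a ∩ u).Nonempty) :
    ∃ p : Ultrafilter α, u ∈ p ∧ ∀ a ∈ B, a ∈ p ↔ a ∈ r := by
  classical
  obtain ⟨p, hp⟩ := Ultrafilter.exists_ultrafilter_of_finite_inter_nonempty
    (insert u {a | a ∈ B ∧ a ∈ r}) fun T hT => by
      have hTu : ((T.erase u : Finset (Set α)) : Set (Set α)) ⊆ {a | a ∈ B ∧ a ∈ r} :=
        fun a ha => (hT (Finset.mem_of_mem_erase ha)).resolve_left (Finset.ne_of_mem_erase ha)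
      have hfin := (T.erase u).finite_toSet
      refine (hu _ (B.infClosed.sInf_mem hfin B.top_mem fun a ha => (hTu ha).1)
        ((sInter_mem hfin).2 fun a ha => (hTu ha).2)).mono fun x hx a ha => ?_
      by_cases hau : a = u
      · exact hau ▸ hx.2
      · exact hx.1 a (Finset.mem_erase.2 ⟨hau, ha⟩)
  refine ⟨p, hp (mem_insert _ _), fun a ha => ⟨fun hap => by_contra fun har => ?_,
    fun har => hp (Or.inr ⟨ha, har⟩)⟩⟩
  exact (Ultrafilter.compl_mem_iff_notMem.1
    (hp (Or.inr ⟨B.compl_mem ha, Ultrafilter.compl_mem_iff_notMem.2 har⟩))) hap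

theorem BooleanSubalgebra.exists_ultrafilter_ne_forall_mem_iff {B : BooleanSubalgebra (Set α)}
    (hB : B ≠ ⊤) : ∃ p q : Ultrafilter α, p ≠ q ∧ ∀ a ∈ B, a ∈ p ↔ a ∈ q := by
  obtain ⟨u, hu⟩ : ∃ u, u ∉ B := by
    by_contra! h
    exact hB (eq_top_iff.2 fun u _ => h u)
  obtain ⟨r, hr⟩ : ∃ r : Ultrafilter α, ∀ a ∈ B, a ∈ r → (a ∩ u).Nonempty ∧ (a ∩ uᶜ).Nonempty := by
    by_contra! h
    let D := {a | a ∈ B ∧ ((a ∩ u).Nonempty → a ∩ uᶜ = ∅)}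
    obtain ⟨T, hTD, hT, hcover⟩ := isCompact_univ.elim_finite_subcover_image
      (b := D) (c := fun a => {r : Ultrafilter α | a ∈ r}) (fun a _ => ultrafilter_isOpen_basic a)
      fun r _ => by
        obtain ⟨a, ha, har, hau⟩ := h r
        exact mem_biUnion (x := a) ⟨ha, hau⟩ har
    apply hu
    suffices hu' : u = sSup {a ∈ T | a ⊆ u} by
      rw [hu']
      exact B.supClosed.sSup_mem (hT.subset (sep_subset _ _)) B.bot_mem fun a ha => (hTD ha.1).1
    refine Subset.antisymm (fun x hx => ?_) (sUnion_subset fun a ha => ha.2)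
    obtain ⟨a, haT, hxa⟩ := mem_iUnion₂.1 (hcover (mem_univ (pure x)))
    refine ⟨a, ⟨haT, fun y hya => by_contra fun hyu => ?_⟩, hxa⟩
    exact eq_empty_iff_forall_notMem.1 ((hTD haT).2 ⟨x, hxa, hx⟩) y ⟨hya, hyu⟩
  obtain ⟨p, hup, hp⟩ := B.exists_ultrafilter_mem_forall_mem_iff r fun a ha har => (hr a ha har).1
  obtain ⟨q, huq, hq⟩ := B.exists_ultrafilter_mem_forall_mem_iff r fun a ha har => (hr a ha har).2
  refine ⟨p, q, fun hpq => Ultrafilter.compl_mem_iff_notMem.1 huq (hpq ▸ hup), fun a ha => ?_⟩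
  rw [hp a ha, hq a ha]

theorem BooleanSubalgebra.exists_eq_top_of_monotone {A : ℕ → BooleanSubalgebra (Set α)}
    (hA : Monotone A) (hcover : ∀ s, ∃ n, s ∈ A n) : ∃ n, A n = ⊤ := by
  by_contra! h
  choose p q hpq hpqA using fun n => exists_ultrafilter_ne_forall_mem_iff (h n)
  obtain ⟨s, hs⟩ := Ultrafilter.exists_set_separating_infinitely_many p q hpq
  obtain ⟨N, hN⟩ := hcover s
  obtain ⟨n, hn, hNn⟩ := hs.exists_gt N
  exact hn (hpqA n s (hA hNn.le hN))

theorem commutator_pi_eq_top {η : Type*} [Finite η] {G : η → Type*} [∀ i, Group (G i)]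
    (h : ∀ i, commutator (G i) = ⊤) : commutator (∀ i, G i) = ⊤ := by
  simp only [commutator_def] at h ⊢
  rw [← Subgroup.pi_top univ, Subgroup.commutator_pi_pi_of_finite]
  simp [h]

namespace Pi

variable {ι : Type*} {S : ι → Type*} [∀ i, Group (S i)]

open scoped Classical in
noncomputable def mulIndicatorHom (A : Set ι) : (∀ i, S i) →* ∀ i, S i where
  toFun g i := if i ∈ A then g i else 1
  map_one' := by ext i; simp
  map_mul' g h := by ext i; by_cases hi : i ∈ A <;> simp [hi]

open scoped Classical in
theorem mulIndicatorHom_apply (A : Set ι) (g : ∀ i, S i) (i : ι) :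
    mulIndicatorHom A g i = if i ∈ A then g i else 1 := rfl

theorem mulIndicatorHom_univ (g : ∀ i, S i) : mulIndicatorHom univ g = g := by
  ext i; simp [mulIndicatorHom_apply]

theorem mulIndicatorHom_empty (g : ∀ i, S i) : mulIndicatorHom ∅ g = 1 := by
  ext i; simp [mulIndicatorHom_apply]

theorem mulIndicatorHom_compl (A : Set ι) (g : ∀ i, S i) :
    mulIndicatorHom Aᶜ g = g * (mulIndicatorHom A g)⁻¹ := by
  ext i; by_cases hi : i ∈ A <;> simp [mulIndicatorHom_apply, hi]

theorem mulIndicatorHom_inter_commutatorElement (A B : Set ι) (g h : ∀ i, S i) :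
    mulIndicatorHom (A ∩ B) ⁅g, h⁆ = ⁅mulIndicatorHom A g, mulIndicatorHom B h⁆ := by
  ext i
  by_cases hA : i ∈ A <;> by_cases hB : i ∈ B <;>
    simp [mulIndicatorHom_apply, commutatorElement_def, hA, hB]

theorem mulIndicatorHom_inter_mul_diff (A B : Set ι) (g : ∀ i, S i) :
    mulIndicatorHom (A ∩ B) g * mulIndicatorHom (A \ B) g = mulIndicatorHom A g := by
  ext i; by_cases hA : i ∈ A <;> by_cases hB : i ∈ B <;> simp [mulIndicatorHom_apply, hA, hB]

theorem mulIndicatorHom_congr {A : Set ι} {g h : ∀ i, S i} (hgh : ∀ i ∈ A, g i = h i) :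
    mulIndicatorHom A g = mulIndicatorHom A h := by
  ext i; by_cases hi : i ∈ A <;> simp [mulIndicatorHom_apply, hi, hgh]

variable {P : Type*} [Group P] {H : Subgroup (∀ i, S i)}

theorem mulIndicatorHom_compl_mem (φ : P →* ∀ i, S i) (hφ : ∀ p, φ p ∈ H) {A : Set ι}
    (hA : ∀ p, mulIndicatorHom A (φ p) ∈ H) (p : P) : mulIndicatorHom Aᶜ (φ p) ∈ H := by
  rw [mulIndicatorHom_compl]
  exact mul_mem (hφ p) (inv_mem (hA p))

theorem mulIndicatorHom_inter_mem (hP : commutator P = ⊤) (φ : P →* ∀ i, S i) {A B : Set ι}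
    (hA : ∀ p, mulIndicatorHom A (φ p) ∈ H) (hB : ∀ p, mulIndicatorHom B (φ p) ∈ H) (p : P) :
    mulIndicatorHom (A ∩ B) (φ p) ∈ H := by
  suffices commutator P ≤ H.comap ((mulIndicatorHom (A ∩ B)).comp φ) by
    rw [hP, top_le_iff] at this
    exact (Subgroup.eq_top_iff' _).1 this p
  rw [commutator_def, Subgroup.commutator_le]
  intro p _ q _
  rw [Subgroup.mem_comap, MonoidHom.comp_apply, map_commutatorElement,
    mulIndicatorHom_inter_commutatorElement, commutatorElement_def]
  exact mul_mem (mul_mem (mul_mem (hA p) (hB q)) (inv_mem (hA p))) (inv_mem (hB q))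

noncomputable def indicatorAlgebra (H : Subgroup (∀ i, S i)) (hP : commutator P = ⊤)
    (φ : P →* ∀ i, S i) (hφ : ∀ p, φ p ∈ H) : BooleanSubalgebra (Set ι) where
  carrier := {A | ∀ p, mulIndicatorHom A (φ p) ∈ H}
  infClosed' _ hA _ hB := mulIndicatorHom_inter_mem hP φ hA hB
  supClosed' A hA B hB p := by
    have := mulIndicatorHom_compl_mem φ hφ (mulIndicatorHom_inter_mem hP φ
      (mulIndicatorHom_compl_mem φ hφ hA) (mulIndicatorHom_compl_mem φ hφ hB)) p
    rwa [compl_inter, compl_compl, compl_compl] at this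
  compl_mem' hA := mulIndicatorHom_compl_mem φ hφ hA
  bot_mem' p := by simp [mulIndicatorHom_empty]

theorem eq_top_of_forall_mulIndicatorHom_mem [Finite P] (φ : P → ∀ i, S i)
    (hφ : ∀ i, Surjective fun p => φ p i) (hH : ∀ A p, mulIndicatorHom A (φ p) ∈ H) :
    H = ⊤ := by
  classical
  have := Fintype.ofFinite P
  refine eq_top_iff.2 fun g _ => ?_
  have key : ∀ T : Finset P, ∀ A ⊆ {i | ∃ p ∈ T, φ p i = g i}, mulIndicatorHom A g ∈ H := by
    intro T
    induction T using Finset.induction_on with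
    | empty =>
      intro A hA
      rw [subset_empty_iff.1 (fun i hi => by simpa using hA hi : A ⊆ ∅), mulIndicatorHom_empty]
      exact one_mem H
    | insert p T _ ih =>
      intro A hA
      rw [← mulIndicatorHom_inter_mul_diff A {i | φ p i = g i}]
      refine mul_mem ?_ (ih _ fun i hi => ?_)
      · rw [← mulIndicatorHom_congr fun i hi => hi.2]; exact hH _ p
      · exact ((Finset.exists_mem_insert _ _ _).1 (hA hi.1)).resolve_left hi.2
  simpa [mulIndicatorHom_univ] using key Finset.univ univ fun i _ => by simpa using hφ i (g i)

theorem exists_subgroup_eq_top_of_monotone [Finite P] (hP : commutator P = ⊤)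
    (φ : P →* ∀ i, S i) (hφ : ∀ i, Surjective fun p => φ p i) {H : ℕ → Subgroup (∀ i, S i)}
    (hH : Monotone H) (hcover : ∀ g, ∃ t, g ∈ H t) : ∃ t, H t = ⊤ := by
  have hev : ∀ g, ∀ᶠ t in atTop, g ∈ H t := fun g =>
    let ⟨t, ht⟩ := hcover g
    eventually_atTop.2 ⟨t, fun _ h => hH h ht⟩
  obtain ⟨t₀, ht₀⟩ := eventually_atTop.1 (eventually_all.2 fun p => hev (φ p))
  let A t := indicatorAlgebra (H (t + t₀)) hP φ (ht₀ _ (Nat.le_add_left _ _))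
  have hA : Monotone A := fun s t hst B hB p => hH (by omega) (hB p)
  obtain ⟨t, ht⟩ := BooleanSubalgebra.exists_eq_top_of_monotone hA fun B => by
    obtain ⟨T, hT⟩ := eventually_atTop.1 (eventually_all.2 fun p => hev (mulIndicatorHom B (φ p)))
    exact ⟨T, hT _ (Nat.le_add_right _ _)⟩
  refine ⟨t + t₀, eq_top_of_forall_mulIndicatorHom_mem φ hφ fun B => ?_⟩
  exact (ht.symm ▸ BooleanSubalgebra.mem_top : B ∈ A t)

end Pi

end

theorem stmt_6_general (S : ℕ → Type*) [∀ n, Group (S n)] [∀ n, Finite (S n)]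
    (hperf : ∀ n, commutator (S n) = ⊤)
    (hfin : ∃ J : Finset ℕ, ∀ n, ∃ m ∈ J, Nonempty (S n ≃* S m)) :
    ¬ ∃ H : ℕ → Subgroup (∀ n, S n),
        Monotone H ∧ (∀ t, H t ≠ ⊤) ∧ ∀ g : ∀ n, S n, ∃ t, g ∈ H t := by
  rintro ⟨H, hH, hne, hcover⟩
  obtain ⟨J, hJ⟩ := hfin
  choose m hm e using hJ
  let φ : (∀ j : J, S j) →* ∀ n, S n := MonoidHom.pi fun n =>
    ((e n).some.symm : S (m n) →* S n).comp (Pi.evalMonoidHom (fun j : J => S j) ⟨m n, hm n⟩)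
  obtain ⟨t, ht⟩ := Pi.exists_subgroup_eq_top_of_monotone
    (commutator_pi_eq_top fun j : J => hperf j) φ
    (fun n => (e n).some.symm.surjective.comp (Function.surjective_eval _)) hH hcover
  exact hne t ht

/-- Let `Sₙ` be nontrivial finite perfect groups falling into finitely many isomorphism
classes (every `Sₙ` is isomorphic to some `Sₘ` with `m` in a fixed finite set). Then
`∏ n, Sₙ` cannot be written as the union of a countable increasing chain of proper
subgroups. -/
theorem stmt_6 (S : ℕ → Type*) [∀ n, Group (S n)] [∀ n, Finite (S n)]
    [∀ n, Nontrivial (S n)] (hperf : ∀ n, commutator (S n) = ⊤)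
    (hfin : ∃ J : Finset ℕ, ∀ n, ∃ m ∈ J, Nonempty (S n ≃* S m)) :
    ¬ ∃ H : ℕ → Subgroup (∀ n, S n),
        Monotone H ∧ (∀ t, H t ≠ ⊤) ∧ ∀ g : ∀ n, S n, ∃ t, g ∈ H t :=
  stmt_6_general S hperf hfin
end

section
/- Let (H_n)_{n∈ℕ} and (G_n)_{n∈ℕ} be sequences of groups with H_n a subgroup of G_n for all n. Suppose there exists an element w of the free group on generators x_1, …, x_s, y_1, …, y_t such that: for every n ∈ ℕ there exist θ_1, …, θ_t ∈ G_n such that every φ ∈ G_n can be expressed as φ = w(ψ_1, …, ψ_s, θ_1, …, θ_t) for some ψ_1, …, ψ_s ∈ H_n (where w(ψ_1,…,ψ_s,θ_1,…,θ_t) denotes the evaluation of the word w substituting ψ_i for x_i and θ_j for y_j). Then there exist elements g_1, …, g_t ∈ ∏_n G_n such that ∏_n G_n is generated by ∏_n H_n together with g_1, …, g_t. -/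
/-- Uniform generation: if there is a word `w` in `s + t` letters such that for each `n`
there are `θ₁, …, θ_t ∈ Gₙ` such that every `φ ∈ Gₙ` equals `w(ψ₁,…,ψ_s,θ₁,…,θ_t)` for
some `ψᵢ ∈ Hₙ`, then `∏ n, Gₙ` is generated by `∏ n, Hₙ` together with `t` elements. -/
theorem stmt_7 (s t : ℕ) (G : ℕ → Type*) [∀ n, Group (G n)] (H : ∀ n, Subgroup (G n))
    (w : FreeGroup (Fin s ⊕ Fin t))
    (hw : ∀ n, ∃ θ : Fin t → G n, ∀ φ : G n, ∃ ψ : Fin s → G n,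
        (∀ i, ψ i ∈ H n) ∧ φ = FreeGroup.lift (Sum.elim ψ θ) w) :
    ∃ g : Fin t → (∀ n, G n),
      Subgroup.closure
        (((Subgroup.pi Set.univ H : Subgroup (∀ n, G n)) : Set (∀ n, G n)) ∪ Set.range g)
        = ⊤ := by
  choose θ hθ using hw
  refine ⟨fun j n => θ n j, ?_⟩
  rw [eq_top_iff]
  intro φ _
  choose ψ hψmem hψeq using fun n => hθ n (φ n)
  set f : Fin s ⊕ Fin t → (∀ n, G n) := Sum.elim (fun i n => ψ n i) (fun j n => θ n j) with hf
  have hφ : φ = FreeGroup.lift f w := by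
    funext n
    have : (Pi.evalMonoidHom G n).comp (FreeGroup.lift f) =
        FreeGroup.lift (fun x => f x n) := by
      apply FreeGroup.ext_hom
      intro x
      simp
    have h2 := DFunLike.congr_fun this w
    simp only [MonoidHom.comp_apply, Pi.evalMonoidHom_apply] at h2
    have h3 : (fun x => f x n) = Sum.elim (ψ n) (θ n) := by
      funext x; cases x <;> rfl
    rw [h2, hψeq n, h3]
  rw [hφ]
  have : FreeGroup.lift f w ∈ (FreeGroup.lift f).range := ⟨w, rfl⟩
  rw [FreeGroup.range_lift_eq_closure] at this
  refine Subgroup.closure_mono ?_ this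
  rintro _ ⟨x, rfl⟩
  cases x with
  | inl i => exact Or.inl (fun n _ => hψmem n i)
  | inr j => exact Or.inr ⟨j, rfl⟩
end

section
/- Let m ≥ 3 and let θ = (m−2, m−1)(m, m+1) ∈ Alt(m+1), the product of the two transpositions swapping m−2 with m−1 and m with m+1. Regard Alt(m) as the subgroup of Alt(m+1) consisting of the even permutations of {1, …, m+1} fixing the point m+1. Then for every φ ∈ Alt(m+1) there exist ψ_1, ψ_2, ψ_3 ∈ Alt(m) such that φ = ψ_1 θ ψ_2 θ ψ_3. -/
/-!
Write `H` for the even permutations fixing the point `n`. Since `H` acts transitively on the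
remaining points, one can pick `ψ₃, ψ₁ ∈ H` so that `ψ₁⁻¹ φ ψ₃⁻¹` sends `θ⁻¹ n` to `θ n`:
first move `θ⁻¹ n` by `ψ₃⁻¹` to a point `x` with `φ x ≠ n`, then let `ψ₁` send `θ n` to `φ x`.
Then `ψ₂ := θ⁻¹ ψ₁⁻¹ φ ψ₃⁻¹ θ⁻¹` fixes `n`, and `φ = ψ₁ θ ψ₂ θ ψ₃`.
-/

open Equiv Equiv.Perm

variable {α : Type*} [DecidableEq α] [Fintype α]

lemma swap_mul_swap_mem_alternatingGroup {a b c d : α} (hab : a ≠ b) (hcd : c ≠ d) :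
    swap a b * swap c d ∈ alternatingGroup α :=
  mul_mem_alternatingGroup_of_isSwap ⟨a, b, hab, rfl⟩ ⟨c, d, hcd, rfl⟩

lemma exists_mem_alternatingGroup_fix_apply_eq (hα : 4 ≤ Fintype.card α) {n a b : α}
    (ha : a ≠ n) (hb : b ≠ n) : ∃ ψ ∈ alternatingGroup α, ψ n = n ∧ ψ a = b := by
  by_cases hab : a = b
  · exact ⟨1, one_mem _, rfl, hab⟩
  obtain ⟨c, -, hc⟩ := Finset.exists_mem_notMem_of_card_lt_card (s := {a, b, n})
    (t := Finset.univ) (Finset.card_le_three.trans_lt (by rw [Finset.card_univ]; omega))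
  simp only [Finset.mem_insert, Finset.mem_singleton, not_or] at hc
  obtain ⟨hca, hcb, hcn⟩ := hc
  refine ⟨swap a b * swap b c, swap_mul_swap_mem_alternatingGroup hab (Ne.symm hcb), ?_, ?_⟩
  · rw [mul_apply, swap_apply_of_ne_of_ne hb.symm (Ne.symm hcn),
      swap_apply_of_ne_of_ne ha.symm hb.symm]
  · rw [mul_apply, swap_apply_of_ne_of_ne hab (Ne.symm hca), swap_apply_left]

theorem exists_eq_mul_mul_mul_mul_of_apply_ne (hα : 4 ≤ Fintype.card α) {n : α}
    {θ φ : Perm α} (hθ : θ ∈ alternatingGroup α) (hθn : θ n ≠ n) (hφ : φ ∈ alternatingGroup α) :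
    ∃ ψ₁ ψ₂ ψ₃ : Perm α,
      (ψ₁ ∈ alternatingGroup α ∧ ψ₁ n = n) ∧
      (ψ₂ ∈ alternatingGroup α ∧ ψ₂ n = n) ∧
      (ψ₃ ∈ alternatingGroup α ∧ ψ₃ n = n) ∧
      φ = ψ₁ * θ * ψ₂ * θ * ψ₃ := by
  obtain ⟨x, -, hx⟩ := Finset.exists_mem_notMem_of_card_lt_card (s := {n, φ⁻¹ n})
    (t := Finset.univ) (Finset.card_le_two.trans_lt (by rw [Finset.card_univ]; omega))
  simp only [Finset.mem_insert, Finset.mem_singleton, not_or] at hx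
  obtain ⟨hxn, hφx⟩ : x ≠ n ∧ φ x ≠ n := ⟨hx.1, fun h => hx.2 (eq_inv_iff_eq.mpr h)⟩
  have hθinv : θ⁻¹ n ≠ n := fun h => hθn (inv_eq_iff_eq.mp h).symm
  obtain ⟨ψ₃, hψ₃, hψ₃n, hψ₃x⟩ := exists_mem_alternatingGroup_fix_apply_eq hα hxn hθinv
  obtain ⟨ψ₁, hψ₁, hψ₁n, hψ₁θ⟩ := exists_mem_alternatingGroup_fix_apply_eq hα hθn hφx
  refine ⟨ψ₁, θ⁻¹ * ψ₁⁻¹ * φ * ψ₃⁻¹ * θ⁻¹, ψ₃, ⟨hψ₁, hψ₁n⟩, ⟨?_, ?_⟩, ⟨hψ₃, hψ₃n⟩, by group⟩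
  · exact mul_mem (mul_mem (mul_mem (mul_mem (inv_mem hθ) (inv_mem hψ₁)) hφ) (inv_mem hψ₃))
      (inv_mem hθ)
  · simp only [mul_apply]
    rw [inv_eq_iff_eq, inv_eq_iff_eq, hψ₁θ, ← hψ₃x]
    simp

/-- Let `m ≥ 3` and `θ = (m-2 m-1)(m m+1) ∈ Alt(m+1)` (in 0-indexed form on
`Fin (m+1) = {0, …, m}`: the product of the swaps `(m-3, m-2)` and `(m-1, m)`).
Regarding `Alt(m)` as the even permutations of `{0, …, m}` fixing the last point `m`,
every `φ ∈ Alt(m+1)` can be written as `φ = ψ₁ θ ψ₂ θ ψ₃` with `ψᵢ ∈ Alt(m)`. -/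
theorem stmt_8 (m : ℕ) (hm : 3 ≤ m)
    (θ : Equiv.Perm (Fin (m + 1)))
    (hθ : θ = Equiv.swap ⟨m - 3, by omega⟩ ⟨m - 2, by omega⟩ *
              Equiv.swap ⟨m - 1, by omega⟩ ⟨m, by omega⟩)
    (φ : Equiv.Perm (Fin (m + 1))) (hφ : φ ∈ alternatingGroup (Fin (m + 1))) :
    ∃ ψ₁ ψ₂ ψ₃ : Equiv.Perm (Fin (m + 1)),
      (ψ₁ ∈ alternatingGroup (Fin (m + 1)) ∧ ψ₁ ⟨m, by omega⟩ = ⟨m, by omega⟩) ∧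
      (ψ₂ ∈ alternatingGroup (Fin (m + 1)) ∧ ψ₂ ⟨m, by omega⟩ = ⟨m, by omega⟩) ∧
      (ψ₃ ∈ alternatingGroup (Fin (m + 1)) ∧ ψ₃ ⟨m, by omega⟩ = ⟨m, by omega⟩) ∧
      φ = ψ₁ * θ * ψ₂ * θ * ψ₃ := by
  have hcard : 4 ≤ Fintype.card (Fin (m + 1)) := by rw [Fintype.card_fin]; omega
  have hθA : θ ∈ alternatingGroup (Fin (m + 1)) := by
    rw [hθ]
    exact swap_mul_swap_mem_alternatingGroup (by simp [Fin.ext_iff]; omega)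
      (by simp [Fin.ext_iff]; omega)
  have hθm : θ ⟨m, by omega⟩ = ⟨m - 1, by omega⟩ := by
    rw [hθ, mul_apply, swap_apply_right,
      swap_apply_of_ne_of_ne (by simp [Fin.ext_iff]; omega) (by simp [Fin.ext_iff]; omega)]
  exact exists_eq_mul_mul_mul_mul_of_apply_ne hcard hθA
    (by rw [hθm]; simp [Fin.ext_iff]; omega) hφ
end

section
/- Let m = 8n for some n ≥ 1. Let Δ_0 = {1, …, 4n} and Δ_1 = {4n+1, …, 8n}, and let Γ = Alt(Δ_0) × Alt(Δ_1) be the subgroup of Alt(m) consisting of the even permutations preserving Δ_0 and Δ_1 and even on each of them. Let θ be any involution of {1, …, 8n} which maps Δ_0 onto the set of even numbers in {1, …, 8n} and Δ_1 onto the set of odd numbers in {1, …, 8n}. Then every φ ∈ Alt(m) can be expressed as a product φ = ψ_1 θ ψ_2 θ ψ_3 θ ψ_4 θ ψ_5 θ ψ_6 θ ψ_7 θ ψ_8 θ ψ_9 for some ψ_1, …, ψ_9 ∈ Γ. -/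
/-!
Write `s = Δ₀`, `c` for the odd indices, and `R_s`, `R_c` for their set stabilizers in `Sym(8n)`.
Since `θ Γ θ = Alt(c) × Alt(cᶜ)` and `θ² = 1`, it suffices to write `φ = γ₁ κ γ₂` with
`γ₁, γ₂ ∈ Alt(s) × Alt(sᶜ)` and `κ ∈ Alt(c) × Alt(cᶜ)`; the last six `ψᵢ` are then `1`.

The half turn `τ : x ↦ x + 4n` exchanges `s` and `sᶜ` and preserves `c`. Let `X ⊆ s` be the
points that `φ` moves out of `s` and `Y ⊆ sᶜ` those it moves into `s`; `|X| = |Y|`. A permutation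
`e` of `sᶜ` sends `Y` onto `τ X`, and the permutation `k ∈ R_c` exchanging each `x ∈ X` with `τ x`
then makes `φ e⁻¹ k⁻¹` preserve `s`, so `φ ∈ R_s R_c R_s`.

For the parity, each block of the two outer factors is made even by at most one transposition
inside `s ∩ c` or `τ (s ∩ c)`, which lies in `R_c`. The middle factor is then an even element of
`R_c`; its two blocks are made even by a transposition in `s ∩ c` together with one in `s \ c`, or
by neither, and that product is absorbed into `γ₁` as an element of `Alt(s)`.
-/

/-- Membership in `Γ = Alt(Δ₀) × Alt(Δ₁) ≤ Alt(8n)`, where (in 0-indexed form)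
`Δ₀ = {0, …, 4n-1}` and `Δ₁ = {4n, …, 8n-1}`: `ψ = α * β` where `α` is an even
permutation supported on `Δ₀` and `β` is an even permutation supported on `Δ₁`. -/
def GammaMem (n : ℕ) (ψ : Equiv.Perm (Fin (8 * n))) : Prop :=
  ∃ α β : Equiv.Perm (Fin (8 * n)),
    α ∈ alternatingGroup (Fin (8 * n)) ∧ (∀ x : Fin (8 * n), 4 * n ≤ (x : ℕ) → α x = x) ∧
    β ∈ alternatingGroup (Fin (8 * n)) ∧ (∀ x : Fin (8 * n), (x : ℕ) < 4 * n → β x = x) ∧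
    ψ = α * β

open Equiv Equiv.Perm MulAction
open scoped Pointwise

variable {α : Type*}

lemma commute_of_mem_fixingSubgroup {s : Set α} {a b : Perm α}
    (ha : a ∈ fixingSubgroup (Perm α) sᶜ) (hb : b ∈ fixingSubgroup (Perm α) s) :
    Commute a b := by
  refine Disjoint.commute fun x => ?_
  by_cases hx : x ∈ s
  · exact Or.inr ((mem_fixingSubgroup_iff _).1 hb x hx)
  · exact Or.inl ((mem_fixingSubgroup_iff _).1 ha x hx)

lemma mem_stabilizer_iff_apply {s : Set α} {g : Perm α} :
    g ∈ stabilizer (Perm α) s ↔ ∀ x, g x ∈ s ↔ x ∈ s :=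
  mem_stabilizer_set

lemma fixingSubgroup_le_stabilizer (s : Set α) :
    fixingSubgroup (Perm α) s ≤ stabilizer (Perm α) s := by
  intro g hg
  rw [mem_stabilizer_iff_apply]
  intro x
  by_cases hx : x ∈ s
  · rw [show g x = x from (mem_fixingSubgroup_iff _).1 hg x hx]
  · refine iff_of_false (fun hgx => hx ?_) hx
    have := (mem_fixingSubgroup_iff _).1 hg _ hgx
    rwa [g.injective this] at hgx

lemma exists_mul_eq_of_mem_stabilizer {s : Set α} {g : Perm α}
    (hg : g ∈ stabilizer (Perm α) s) :
    ∃ a ∈ fixingSubgroup (Perm α) sᶜ, ∃ b ∈ fixingSubgroup (Perm α) s, a * b = g := by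
  classical
  have hg' := mem_stabilizer_iff_apply.1 hg
  set a := ofSubtype (g.subtypePerm hg')
  refine ⟨a, (mem_fixingSubgroup_iff _).2 fun x hx => ofSubtype_apply_of_not_mem _ hx,
    a⁻¹ * g, (mem_fixingSubgroup_iff _).2 fun x hx => ?_, mul_inv_cancel_left a g⟩
  rw [Perm.smul_def, mul_apply, inv_eq_iff_eq, ofSubtype_apply_of_mem _ hx, subtypePerm_apply]

section DecidableEq

variable [DecidableEq α]

lemma swap_mem_fixingSubgroup_compl {s : Set α} {x y : α} (hx : x ∈ s) (hy : y ∈ s) :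
    swap x y ∈ fixingSubgroup (Perm α) sᶜ := by
  rw [mem_fixingSubgroup_iff]
  intro z hz
  exact swap_apply_of_ne_of_ne (fun h => hz (h ▸ hx)) (fun h => hz (h ▸ hy))

/-- `k` exchanges each `x ∈ X` with `τ x`. -/
lemma exists_mem_stabilizer_exchange {τ : α → α} {s c : Set α} (hτ : Function.Involutive τ)
    (hτs : ∀ x, τ x ∈ s ↔ x ∉ s) (hτc : ∀ x, τ x ∈ c ↔ x ∈ c) {X : Finset α}
    (hX : ∀ x ∈ X, x ∈ s) :
    ∃ k ∈ stabilizer (Perm α) c, ∀ y, k y ∈ s ↔ (y ∈ s ∧ y ∉ X) ∨ τ y ∈ X := by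
  let f : α → α := fun y => if y ∈ X ∨ τ y ∈ X then τ y else y
  have hf : Function.Involutive f := by
    intro y
    by_cases hy : y ∈ X ∨ τ y ∈ X
    · have hy' : τ y ∈ X ∨ τ (τ y) ∈ X := by rwa [hτ y, or_comm]
      simp only [f, if_pos hy, if_pos hy', hτ y]
    · simp only [f, if_neg hy]
  refine ⟨hf.toPerm f, mem_stabilizer_iff_apply.2 fun y => ?_, fun y => ?_⟩ <;>
    simp only [Function.Involutive.coe_toPerm, f]
  · split_ifs
    exacts [hτc y, Iff.rfl]
  · have := hX y
    have := hX (τ y)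
    have := hτs y
    split_ifs <;> tauto

end DecidableEq

section Fintype

variable [Fintype α] [DecidableEq α]

/-- The paper's `Alt(s)`. -/
def altOn (s : Set α) : Subgroup (Perm α) :=
  alternatingGroup α ⊓ fixingSubgroup (Perm α) sᶜ

/-- The paper's `Alt(s) × Alt(sᶜ)`. -/
def altProd (s : Set α) : Subgroup (Perm α) :=
  altOn s ⊔ altOn sᶜ

lemma altProd_le_alternatingGroup (s : Set α) : altProd s ≤ alternatingGroup α :=
  sup_le inf_le_left inf_le_left

lemma altOn_le_altProd (s : Set α) : altOn s ≤ altProd s :=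
  le_sup_left

lemma mem_altProd {s : Set α} {g : Perm α} :
    g ∈ altProd s ↔ ∃ a ∈ altOn s, ∃ b ∈ altOn sᶜ, a * b = g := by
  have hcomm : altOn s ≤ Subgroup.centralizer (altOn sᶜ : Set (Perm α)) := fun a ha b hb =>
    (commute_of_mem_fixingSubgroup ha.2 (compl_compl s ▸ hb.2)).eq.symm
  rw [← SetLike.mem_coe, altProd, Subgroup.coe_mul_of_left_le_normalizer_right _ _
    (hcomm.trans (Subgroup.centralizer_le_normalizer _))]
  rfl

lemma conj_mem_altOn {s c : Set α} {θ a : Perm α} (hθ : ∀ x, x ∈ s ↔ θ x ∈ c)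
    (ha : a ∈ altOn c) : θ⁻¹ * a * θ ∈ altOn s := by
  refine ⟨by simpa using Subgroup.Normal.conj_mem inferInstance a ha.1 θ⁻¹,
    (mem_fixingSubgroup_iff _).2 fun x hx => ?_⟩
  have : a (θ x) = θ x := (mem_fixingSubgroup_iff _).1 ha.2 _ fun h => hx ((hθ x).2 h)
  simp [Perm.smul_def, this]

lemma conj_mem_altProd {s c : Set α} {θ κ : Perm α} (hθ : ∀ x, x ∈ s ↔ θ x ∈ c)
    (hκ : κ ∈ altProd c) : θ⁻¹ * κ * θ ∈ altProd s := by
  obtain ⟨a, ha, b, hb, rfl⟩ := mem_altProd.1 hκ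
  have hθ' : ∀ x, x ∈ sᶜ ↔ θ x ∈ cᶜ := fun x => (hθ x).not
  exact mem_altProd.2 ⟨_, conj_mem_altOn hθ ha, _, conj_mem_altOn hθ' hb, by group⟩

lemma exists_mem_sign_eq {H : Subgroup (Perm α)} {x y : α} (hxy : x ≠ y) (hH : swap x y ∈ H)
    (a : Perm α) : ∃ u ∈ H, sign u = sign a := by
  rcases Int.units_eq_one_or (sign a) with h | h
  · exact ⟨1, H.one_mem, by rw [h, map_one]⟩
  · exact ⟨swap x y, hH, by rw [h, sign_swap hxy]⟩

/-- Each of the two blocks of `g` is made even by at most one transposition inside the block. -/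
lemma exists_mul_mem_altProd {V : Subgroup (Perm α)} {s : Set α} {x y z w : α}
    (hxy : x ≠ y) (hx : x ∈ s) (hy : y ∈ s) (hzw : z ≠ w) (hz : z ∉ s) (hw : w ∉ s)
    (hVxy : swap x y ∈ V) (hVzw : swap z w ∈ V) {g : Perm α}
    (hg : g ∈ stabilizer (Perm α) s) : ∃ u ∈ V, u * g ∈ altProd s := by
  obtain ⟨a, ha, b, hb, rfl⟩ := exists_mul_eq_of_mem_stabilizer hg
  have hzw' : swap z w ∈ fixingSubgroup (Perm α) s :=
    compl_compl s ▸ swap_mem_fixingSubgroup_compl (s := sᶜ) hz hw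
  obtain ⟨u, hu', hu⟩ := exists_mem_sign_eq (H := V ⊓ fixingSubgroup (Perm α) sᶜ) hxy
    (Subgroup.mem_inf.2 ⟨hVxy, swap_mem_fixingSubgroup_compl hx hy⟩) a
  obtain ⟨v, hv', hv⟩ := exists_mem_sign_eq (H := V ⊓ fixingSubgroup (Perm α) s) hzw
    (Subgroup.mem_inf.2 ⟨hVzw, hzw'⟩) b
  obtain ⟨huV, hus⟩ := Subgroup.mem_inf.1 hu'
  obtain ⟨hvV, hvs⟩ := Subgroup.mem_inf.1 hv'
  have hav : Commute a v⁻¹ := commute_of_mem_fixingSubgroup ha (inv_mem hvs)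
  refine ⟨u⁻¹ * v⁻¹, mul_mem (inv_mem huV) (inv_mem hvV), mem_altProd.2
    ⟨u⁻¹ * a, Subgroup.mem_inf.2 ⟨?_, mul_mem (inv_mem hus) ha⟩, v⁻¹ * b,
      Subgroup.mem_inf.2 ⟨?_, ?_⟩, ?_⟩⟩
  · rw [mem_alternatingGroup, map_mul, map_inv, hu, inv_mul_cancel]
  · rw [mem_alternatingGroup, map_mul, map_inv, hv, inv_mul_cancel]
  · exact (compl_compl s).symm ▸ mul_mem (inv_mem hvs) hb
  · rw [mul_assoc, mul_assoc, ← mul_assoc a, hav.eq, mul_assoc]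

lemma exists_mem_fixingSubgroup_compl_apply_mem_iff {t : Set α} {Y Z : Finset α}
    (hY : ∀ x ∈ Y, x ∈ t) (hZ : ∀ x ∈ Z, x ∈ t) (h : Y.card = Z.card) :
    ∃ e ∈ fixingSubgroup (Perm α) tᶜ, ∀ x, e x ∈ Z ↔ x ∈ Y := by
  classical
  let e₀ : {y : t // y.1 ∈ Y} ≃ {y : t // y.1 ∈ Z} :=
    (subtypeSubtypeEquivSubtype (hY _)).trans
      ((Fintype.equivOfCardEq (by simpa using h)).trans (subtypeSubtypeEquivSubtype (hZ _)).symm)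
  refine ⟨ofSubtype e₀.extendSubtype,
    (mem_fixingSubgroup_iff _).2 fun x hx => ofSubtype_apply_of_not_mem _ hx, fun x => ?_⟩
  by_cases hx : x ∈ t
  · rw [ofSubtype_apply_of_mem _ hx]
    by_cases hxY : x ∈ Y
    · exact iff_of_true (e₀.extendSubtype_mem ⟨x, hx⟩ hxY) hxY
    · exact iff_of_false (e₀.extendSubtype_not_mem ⟨x, hx⟩ hxY) hxY
  · rw [ofSubtype_apply_of_not_mem _ hx]
    exact iff_of_false (fun h => hx (hZ x h)) (fun h => hx (hY x h))

variable {τ : α → α} {s c : Set α}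

theorem exists_stabilizer_mul_stabilizer_mul_stabilizer (hτ : Function.Involutive τ)
    (hτs : ∀ x, τ x ∈ s ↔ x ∉ s) (hτc : ∀ x, τ x ∈ c ↔ x ∈ c) (φ : Perm α) :
    ∃ h ∈ stabilizer (Perm α) s, ∃ k ∈ stabilizer (Perm α) c, ∃ e ∈ stabilizer (Perm α) s,
      h * k * e = φ := by
  classical
  set S := Finset.univ.filter (· ∈ s)
  set Q := Finset.univ.filter (fun x => φ x ∈ s)
  set Z := (S \ Q).map (hτ.toPerm τ).toEmbedding
  have hX : ∀ y, y ∈ S \ Q ↔ y ∈ s ∧ φ y ∉ s := by simp [S, Q]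
  have hY : ∀ y, y ∈ Q \ S ↔ φ y ∈ s ∧ y ∉ s := by simp [S, Q]
  have hZ : ∀ y, y ∈ Z ↔ τ y ∈ S \ Q := by
    simp only [Z, Finset.mem_map_equiv, Function.Involutive.toPerm_symm,
      Function.Involutive.coe_toPerm, implies_true]
  have hQS : Q = S.map φ.symm.toEmbedding := by
    ext x
    simp [Q, S, Finset.mem_map_equiv]
  have hcard : (Q \ S).card = Z.card := by
    rw [Finset.card_map, Finset.card_sdiff_eq_card_sdiff_iff, hQS, Finset.card_map]
  obtain ⟨e, he, hemap⟩ := exists_mem_fixingSubgroup_compl_apply_mem_iff (t := sᶜ)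
    (fun y hy => ((hY y).1 hy).2) (fun y hy => (hτs y).1 ((hX _).1 ((hZ y).1 hy)).1) hcard
  obtain ⟨k, hk, hkmap⟩ :=
    exists_mem_stabilizer_exchange hτ hτs hτc (fun x hx => ((hX x).1 hx).1)
  rw [compl_compl] at he
  have key : ∀ x, k (e x) ∈ s ↔ φ x ∈ s := by
    intro x
    rw [hkmap, hX, hX]
    by_cases hx : x ∈ s
    · rw [show e x = x from (mem_fixingSubgroup_iff _).1 he x hx]
      have := hτs x
      tauto
    · have hex : e x ∉ s :=
        (mem_stabilizer_iff_apply.1 (fixingSubgroup_le_stabilizer s he) x).not.2 hx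
      have := hemap x
      rw [hZ, hX, hY] at this
      tauto
  refine ⟨φ * (k * e)⁻¹, mem_stabilizer_iff_apply.2 fun y => ?_, k, hk, e,
    fixingSubgroup_le_stabilizer s he, by group⟩
  simpa using (key ((k * e)⁻¹ y)).symm

theorem exists_altProd_mul_altProd_mul_altProd (hτ : Function.Involutive τ)
    (hτs : ∀ x, τ x ∈ s ↔ x ∉ s) (hτc : ∀ x, τ x ∈ c ↔ x ∈ c)
    (hsc : (s ∩ c).Nontrivial) (hsc' : (s \ c).Nontrivial) {φ : Perm α}
    (hφ : φ ∈ alternatingGroup α) :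
    ∃ γ₁ ∈ altProd s, ∃ κ ∈ altProd c, ∃ γ₂ ∈ altProd s, γ₁ * κ * γ₂ = φ := by
  obtain ⟨a₁, ha₁, a₂, ha₂, ha⟩ := hsc
  obtain ⟨b₁, hb₁, b₂, hb₂, hb⟩ := hsc'
  obtain ⟨h, hh, k, hk, e, he, rfl⟩ := exists_stabilizer_mul_stabilizer_mul_stabilizer hτ hτs hτc φ
  have hτa₁ : τ a₁ ∉ s := fun h => (hτs a₁).1 h ha₁.1
  have hτa₂ : τ a₂ ∉ s := fun h => (hτs a₂).1 h ha₂.1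
  have hτa : swap (τ a₁) (τ a₂) ∈ stabilizer (Perm α) c :=
    swap_mem_stabilizer ((hτc _).2 ha₁.2) ((hτc _).2 ha₂.2)
  obtain ⟨u, hu, hhu⟩ := exists_mul_mem_altProd ha ha₁.1 ha₂.1 (hτ.injective.ne ha)
    hτa₁ hτa₂ (swap_mem_stabilizer ha₁.2 ha₂.2) hτa (inv_mem hh)
  obtain ⟨v, hv, hve⟩ := exists_mul_mem_altProd ha ha₁.1 ha₂.1 (hτ.injective.ne ha)
    hτa₁ hτa₂ (swap_mem_stabilizer ha₁.2 ha₂.2) hτa he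
  obtain ⟨w, hw, hwκ⟩ := exists_mul_mem_altProd ha ha₁.2 ha₂.2 hb hb₁.2 hb₂.2
    (swap_mem_fixingSubgroup_compl ha₁.1 ha₂.1) (swap_mem_fixingSubgroup_compl hb₁.1 hb₂.1)
    (mul_mem (mul_mem hu hk) (inv_mem hv))
  have hκ : u * k * v⁻¹ ∈ alternatingGroup α := by
    have := mul_mem (mul_mem (altProd_le_alternatingGroup s hhu) hφ)
      (inv_mem (altProd_le_alternatingGroup s hve))
    convert this using 1
    group
  have hw' : w ∈ altOn s := by
    have := mul_mem (altProd_le_alternatingGroup c hwκ) (inv_mem hκ)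
    rw [mul_inv_cancel_right] at this
    exact Subgroup.mem_inf.2 ⟨this, hw⟩
  exact ⟨(u * h⁻¹)⁻¹ * w⁻¹, mul_mem (inv_mem hhu) (inv_mem (altOn_le_altProd s hw')), _, hwκ,
    _, hve, by group⟩

end Fintype

def halfTurn (n : ℕ) (x : Fin (8 * n)) : Fin (8 * n) :=
  ⟨if (x : ℕ) < 4 * n then x + 4 * n else x - 4 * n, by split_ifs <;> omega⟩

lemma halfTurn_involutive (n : ℕ) : Function.Involutive (halfTurn n) := by
  intro x
  ext
  simp only [halfTurn]
  split_ifs <;> omega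

lemma gammaMem_of_mem_altProd {n : ℕ} {ψ : Perm (Fin (8 * n))}
    (hψ : ψ ∈ altProd {x : Fin (8 * n) | (x : ℕ) < 4 * n}) : GammaMem n ψ := by
  obtain ⟨a, ha, b, hb, rfl⟩ := mem_altProd.1 hψ
  refine ⟨a, b, ha.1, fun x hx => ?_, hb.1, fun x hx => ?_, rfl⟩
  · exact (mem_fixingSubgroup_iff _).1 ha.2 x (by simpa using hx)
  · exact (mem_fixingSubgroup_iff _).1 hb.2 x (by simpa using hx)

/-- Let `m = 8n` with `n ≥ 1`, and let `θ` be any involution of `{0, …, 8n-1}` mapping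
`Δ₀ = {0, …, 4n-1}` onto the points corresponding to even numbers of `{1, …, 8n}`
(i.e. odd indices) and `Δ₁` onto those corresponding to odd numbers (even indices).
Then every `φ ∈ Alt(m)` is `ψ₁ θ ψ₂ θ ψ₃ θ ψ₄ θ ψ₅ θ ψ₆ θ ψ₇ θ ψ₈ θ ψ₉` with all
`ψᵢ ∈ Γ = Alt(Δ₀) × Alt(Δ₁)`. -/
theorem stmt_10 (n : ℕ) (hn : 1 ≤ n)
    (θ : Equiv.Perm (Fin (8 * n))) (hθ1 : θ ^ 2 = 1)
    (hθ2 : ∀ x : Fin (8 * n), (x : ℕ) < 4 * n ↔ (θ x : ℕ) % 2 = 1)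
    (φ : Equiv.Perm (Fin (8 * n))) (hφ : φ ∈ alternatingGroup (Fin (8 * n))) :
    ∃ ψ₁ ψ₂ ψ₃ ψ₄ ψ₅ ψ₆ ψ₇ ψ₈ ψ₉ : Equiv.Perm (Fin (8 * n)),
      GammaMem n ψ₁ ∧ GammaMem n ψ₂ ∧ GammaMem n ψ₃ ∧ GammaMem n ψ₄ ∧ GammaMem n ψ₅ ∧
      GammaMem n ψ₆ ∧ GammaMem n ψ₇ ∧ GammaMem n ψ₈ ∧ GammaMem n ψ₉ ∧
      φ = ψ₁ * θ * ψ₂ * θ * ψ₃ * θ * ψ₄ * θ * ψ₅ * θ * ψ₆ * θ * ψ₇ * θ * ψ₈ * θ * ψ₉ := by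
  set s : Set (Fin (8 * n)) := {x | (x : ℕ) < 4 * n}
  set c : Set (Fin (8 * n)) := {x | (x : ℕ) % 2 = 1}
  have hsc : (s ∩ c).Nontrivial :=
    ⟨⟨1, by omega⟩, by simp [s, c]; omega, ⟨3, by omega⟩, by simp [s, c]; omega, by simp⟩
  have hsc' : (s \ c).Nontrivial :=
    ⟨⟨0, by omega⟩, by simp [s, c]; omega, ⟨2, by omega⟩, by simp [s, c]; omega, by simp⟩
  obtain ⟨γ₁, hγ₁, κ, hκ, γ₂, hγ₂, rfl⟩ := exists_altProd_mul_altProd_mul_altProd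
    (halfTurn_involutive n) (fun x => by simp [s, halfTurn]; split_ifs <;> omega)
    (fun x => by simp [c, halfTurn]; split_ifs <;> omega) hsc hsc' hφ
  have hθθ : θ * θ = 1 := by rw [← sq, hθ1]
  have hθ : θ⁻¹ = θ := inv_eq_of_mul_eq_one_left hθθ
  have hθθ' : ∀ g, θ * (θ * g) = g := fun g => by rw [← mul_assoc, hθθ, one_mul]
  have hconj : θ * κ * θ ∈ altProd s := by
    simpa only [hθ] using conj_mem_altProd (s := s) (c := c) hθ2 hκ
  have h1 : GammaMem n 1 := gammaMem_of_mem_altProd (one_mem _)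
  refine ⟨γ₁, θ * κ * θ, γ₂, 1, 1, 1, 1, 1, 1, gammaMem_of_mem_altProd hγ₁,
    gammaMem_of_mem_altProd hconj, gammaMem_of_mem_altProd hγ₂, h1, h1, h1, h1, h1, h1, ?_⟩
  simp only [mul_one, mul_assoc, hθθ, hθθ']
end

section
/- Let (d_n)_{n∈ℕ} be a sequence of integers with d_n ≥ 2 and let (F_n)_{n∈ℕ} be a sequence of finite fields. Regard SL(d_n, F_n) as a subgroup of SL(d_n + 1, F_n) via the block-diagonal embedding A ↦ diag(A, 1) (a matrix acting as A on the first d_n coordinates and fixing the last basis vector). Then ∏_{n∈ℕ} SL(d_n + 1, F_n) is finitely generated over the subgroup ∏_{n∈ℕ} SL(d_n, F_n): there exists a finite subset S of ∏_n SL(d_n + 1, F_n) such that ∏_n SL(d_n + 1, F_n) is generated by (the image of) ∏_n SL(d_n, F_n) together with S. -/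
/-- The block-diagonal embedding `A ↦ diag(A, 1)` of `d × d` matrices into
`(d+1) × (d+1)` matrices. -/
def embedMat {d : ℕ} {F : Type*} [Zero F] [One F] (A : Matrix (Fin d) (Fin d) F) :
    Matrix (Fin (d + 1)) (Fin (d + 1)) F :=
  Matrix.of fun i j =>
    if hi : (i : ℕ) < d then
      (if hj : (j : ℕ) < d then A ⟨i, hi⟩ ⟨j, hj⟩ else 0)
    else (if (j : ℕ) < d then 0 else 1)

/-!
Let `H ≅ SL(d, F)` be the block-diagonal copy in `SL(d+1, F)`, `E = 1 + e_{1,d+1}` and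
`E' = 1 + e_{d+1,1}`. Right multiplication by a lower, an upper and a lower unitriangular block
matrix moves the last row of any `g ∈ SL(d+1, F)` to `(0, …, 0, 1)`, and a matrix with that last
row lies in `H` times an upper unitriangular one. As `SL(d, F)` is transitive on nonzero vectors
for `d ≥ 2`, an upper (lower) unitriangular block matrix is a product of two `H`-conjugates of `E`
(of `E'`). So `SL(d+1, F) = H·(HEHEH)(HE'HE'H)(HEHEH)(HE'HE'H)`, a word whose shape depends
neither on `d` nor on `F`; such a uniform decomposition passes to direct products componentwise.
-/

open scoped Pointwise
open Set Matrix

section Words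

variable {G : Type*} [Group G]

def sandwich (H : Set G) (s : G) : Set G := H * {s} * H * {s} * H

def sandwichWord (H : Set G) (s t : G) : Set G :=
  H * sandwich H s * sandwich H t * sandwich H s * sandwich H t

lemma mem_sandwich {H : Set G} {s g : G} :
    g ∈ sandwich H s ↔ ∃ a ∈ H, ∃ b ∈ H, ∃ c ∈ H, a * s * b * s * c = g := by
  simp only [sandwich, mem_mul, mem_singleton_iff]
  aesop

lemma image_sandwichWord {G' : Type*} [Group G'] (f : G →* G') (H : Set G) (s t : G) :
    f '' sandwichWord H s t = sandwichWord (f '' H) (f s) (f t) := by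
  simp only [sandwichWord, sandwich, image_mul, image_singleton]

lemma sandwichWord_subset_closure (H : Set G) (s t : G) :
    sandwichWord H s t ⊆ Subgroup.closure (H ∪ {s, t}) := by
  have hH : H ⊆ Subgroup.closure (H ∪ {s, t}) :=
    subset_union_left.trans Subgroup.subset_closure
  have hs : {s} ⊆ (Subgroup.closure (H ∪ {s, t}) : Set G) :=
    singleton_subset_iff.2 (Subgroup.subset_closure (by simp))
  have ht : {t} ⊆ (Subgroup.closure (H ∪ {s, t}) : Set G) :=
    singleton_subset_iff.2 (Subgroup.subset_closure (by simp))
  simp only [sandwichWord, sandwich]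
  repeat' apply Subgroup.mul_subset
  all_goals assumption

end Words

section Products

variable {ι : Type*} {G : ι → Type*}

lemma Set.univ_pi_mul [∀ i, Mul (G i)] (s t : ∀ i, Set (G i)) :
    univ.pi (fun i => s i * t i) = univ.pi s * univ.pi t := by
  ext g
  constructor
  · intro hg
    choose a ha b hb hab using fun i => mem_mul.1 (hg i trivial)
    exact ⟨a, fun i _ => ha i, b, fun i _ => hb i, funext hab⟩
  · rintro ⟨a, ha, b, hb, rfl⟩ i -
    exact mul_mem_mul (ha i trivial) (hb i trivial)

variable [∀ i, Group (G i)]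

lemma univ_pi_sandwichWord (H : ∀ i, Set (G i)) (s t : ∀ i, G i) :
    univ.pi (fun i => sandwichWord (H i) (s i) (t i)) = sandwichWord (univ.pi H) s t := by
  simp only [sandwichWord, sandwich, Set.univ_pi_mul, univ_pi_singleton]

theorem exists_finset_closure_univ_pi_union_eq_top (H : ∀ i, Set (G i))
    (hH : ∀ i, ∃ s t, sandwichWord (H i) s t = univ) :
    ∃ S : Finset (∀ i, G i), Subgroup.closure (univ.pi H ∪ S) = ⊤ := by
  classical
  choose s t hst using hH
  refine ⟨{s, t}, eq_top_iff.2 fun g _ => ?_⟩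
  have hg : g ∈ univ.pi fun i => sandwichWord (H i) (s i) (t i) := fun i _ => by simp [hst]
  rw [univ_pi_sandwichWord] at hg
  simpa using sandwichWord_subset_closure _ _ _ hg

end Products

namespace Matrix.SpecialLinearGroup

section CommRing

variable {m n R : Type*} [Fintype m] [DecidableEq m] [Fintype n] [DecidableEq n] [CommRing R]

lemma transpose_mul (A B : SpecialLinearGroup n R) : (A * B)ᵀ = Bᵀ * Aᵀ :=
  Subtype.ext (Matrix.transpose_mul _ _)

def reindex (e : m ≃ n) : SpecialLinearGroup m R ≃* SpecialLinearGroup n R where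
  toFun A := ⟨reindexAlgEquiv R R e (A : Matrix m m R), by simp⟩
  invFun A := ⟨reindexAlgEquiv R R e.symm (A : Matrix n n R), by simp⟩
  left_inv A := Subtype.ext (by simp)
  right_inv A := Subtype.ext (by simp)
  map_mul' A B := Subtype.ext (map_mul (reindexAlgEquiv R R e) (A : Matrix m m R) B)

lemma coe_reindex (e : m ≃ n) (A : SpecialLinearGroup m R) :
    (reindex e A : Matrix n n R) = Matrix.reindex e e (A : Matrix m m R) :=
  rfl

end CommRing

variable {ι F : Type*} [Fintype ι] [DecidableEq ι] [Field F]

/-- `SL` is transitive on lines, and a diagonal element of `SL` (which needs a second index `j`)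
fixes the line of `Pi.single i 1` while rescaling `Pi.single i 1` arbitrarily. -/
lemma exists_smul_single_eq [Nontrivial ι] (i : ι) {w : ι → F} (hw : w ≠ 0) :
    ∃ A : SpecialLinearGroup ι F, A • Pi.single i 1 = w := by
  obtain ⟨B, hB⟩ := MulAction.exists_smul_eq (SpecialLinearGroup ι F)
    (Projectivization.mk F (Pi.single i 1) (by simp)) (Projectivization.mk F w hw)
  obtain ⟨a, ha⟩ := (Projectivization.mk_eq_mk_iff _ _ _ _ _).1 hB
  replace ha : (a : F) • w = B • Pi.single i 1 := ha
  obtain ⟨j, hji⟩ := exists_ne i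
  set D := diag2n hji.symm (a⁻¹ : F) (by simp)
  have hD : D • (Pi.single i 1 : ι → F) = (a⁻¹ : F) • Pi.single i 1 := by
    ext k
    by_cases hk : k = i <;> simp [D, hk, diag2n_coe, Matrix.SpecialLinearGroup.smul_def]
  refine ⟨B * D, ?_⟩
  rw [mul_smul, hD, smul_comm, ← ha, smul_smul, inv_mul_cancel₀ a.ne_zero, one_smul]

end Matrix.SpecialLinearGroup

namespace SLBlock

open Matrix.SpecialLinearGroup

variable {ι F : Type*} [Fintype ι] [DecidableEq ι] [Field F]

def blockDiag : SpecialLinearGroup ι F →* SpecialLinearGroup (ι ⊕ Fin 1) F where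
  toFun A := ⟨fromBlocks A 0 0 1, by simp⟩
  map_one' := Subtype.ext fromBlocks_one
  map_mul' A B := Subtype.ext <| by
    change _ = fromBlocks (A : Matrix ι ι F) 0 0 1 * fromBlocks (B : Matrix ι ι F) 0 0 1
    simp [fromBlocks_multiply]

lemma coe_blockDiag (A : SpecialLinearGroup ι F) :
    (blockDiag A : Matrix (ι ⊕ Fin 1) (ι ⊕ Fin 1) F) = fromBlocks A 0 0 1 :=
  rfl

def upper (x : ι → F) : SpecialLinearGroup (ι ⊕ Fin 1) F :=
  ⟨fromBlocks 1 (replicateCol (Fin 1) x) 0 1, by simp⟩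

lemma coe_upper (x : ι → F) :
    (upper x : Matrix (ι ⊕ Fin 1) (ι ⊕ Fin 1) F) = fromBlocks 1 (replicateCol (Fin 1) x) 0 1 :=
  rfl

def lower (y : ι → F) : SpecialLinearGroup (ι ⊕ Fin 1) F := (upper y)ᵀ

lemma coe_lower (y : ι → F) :
    (lower y : Matrix (ι ⊕ Fin 1) (ι ⊕ Fin 1) F) = fromBlocks 1 0 (replicateRow (Fin 1) y) 1 := by
  simp [lower, coe_transpose, coe_upper, fromBlocks_transpose, transpose_replicateCol]

lemma upper_add (x y : ι → F) : upper (x + y) = upper x * upper y := by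
  ext1
  simp [coe_upper, coe_mul, fromBlocks_multiply, add_comm, replicateCol_add]

lemma upper_neg (x : ι → F) : upper (-x) = (upper x)⁻¹ := by
  rw [eq_inv_iff_mul_eq_one, ← upper_add, neg_add_cancel]
  ext1
  simp [coe_upper]

lemma lower_neg (y : ι → F) : lower (-y) = (lower y)⁻¹ := by
  rw [eq_inv_iff_mul_eq_one, lower, lower, ← SpecialLinearGroup.transpose_mul, ← upper_add,
    add_neg_cancel]
  exact Subtype.ext (by simp [coe_transpose, coe_upper])

lemma transpose_blockDiag (A : SpecialLinearGroup ι F) : (blockDiag A)ᵀ = blockDiag Aᵀ :=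
  Subtype.ext (by simp [coe_transpose, coe_blockDiag, fromBlocks_transpose])

lemma blockDiag_mul_upper (A : SpecialLinearGroup ι F) (x : ι → F) :
    blockDiag A * upper x = upper (A • x) * blockDiag A := by
  refine Subtype.ext ?_
  simp only [coe_upper, coe_blockDiag, coe_mul, fromBlocks_multiply]
  simp [Matrix.SpecialLinearGroup.smul_def, replicateCol_mulVec]

lemma blockDiag_mul_upper_mul_inv (A : SpecialLinearGroup ι F) (x : ι → F) :
    blockDiag A * upper x * (blockDiag A)⁻¹ = upper (A • x) := by
  rw [blockDiag_mul_upper, mul_inv_cancel_right]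

/-- Write `x = v + (x - v)` with both summands nonzero; each of `upper v`, `upper (x - v)` is a
`blockDiag`-conjugate of `upper (Pi.single i 1)`. -/
lemma upper_mem_sandwich [Nontrivial ι] (i : ι) (x : ι → F) :
    upper x ∈ sandwich (range blockDiag) (upper (Pi.single i 1)) := by
  obtain ⟨v, hv, hxv⟩ : ∃ v : ι → F, v ≠ 0 ∧ x - v ≠ 0 := by
    obtain ⟨j, hji⟩ := exists_ne i
    by_cases hx : x = Pi.single i 1
    · refine ⟨Pi.single j 1, by simp, fun h => ?_⟩
      simpa [hx, hji.symm] using congr_fun h i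
    · exact ⟨Pi.single i 1, by simp, sub_ne_zero.2 hx⟩
  obtain ⟨A, rfl⟩ := exists_smul_single_eq i hv
  obtain ⟨B, hB⟩ := exists_smul_single_eq i hxv
  refine mem_sandwich.2 ⟨_, ⟨A, rfl⟩, _, ⟨A⁻¹ * B, rfl⟩, _, ⟨B⁻¹, rfl⟩, ?_⟩
  rw [← add_sub_cancel (A • Pi.single i 1) x, upper_add, ← hB,
    ← blockDiag_mul_upper_mul_inv, ← blockDiag_mul_upper_mul_inv, map_mul, map_inv, map_inv]
  group

lemma lower_mem_sandwich [Nontrivial ι] (i : ι) (y : ι → F) :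
    lower y ∈ sandwich (range blockDiag) (lower (Pi.single i 1)) := by
  obtain ⟨_, ⟨a, rfl⟩, _, ⟨b, rfl⟩, _, ⟨c, rfl⟩, h⟩ := mem_sandwich.1 (upper_mem_sandwich i y)
  refine mem_sandwich.2 ⟨_, ⟨cᵀ, rfl⟩, _, ⟨bᵀ, rfl⟩, _, ⟨aᵀ, rfl⟩, ?_⟩
  simp only [lower, ← h, SpecialLinearGroup.transpose_mul, transpose_blockDiag, mul_assoc]

lemma elim_vecMul_upper (a : ι → F) (s : F) (x : ι → F) :
    Sum.elim a (fun _ => s) ᵥ* (upper x : Matrix (ι ⊕ Fin 1) (ι ⊕ Fin 1) F) =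
      Sum.elim a (fun _ => s + a ⬝ᵥ x) := by
  rw [coe_upper, vecMul_fromBlocks]
  ext (k | k) <;> simp [vecMul, dotProduct, add_comm]

lemma elim_vecMul_lower (a : ι → F) (s : F) (y : ι → F) :
    Sum.elim a (fun _ => s) ᵥ* (lower y : Matrix (ι ⊕ Fin 1) (ι ⊕ Fin 1) F) =
      Sum.elim (a + s • y) (fun _ => s) := by
  rw [coe_lower, vecMul_fromBlocks]
  ext (k | k) <;> simp [vecMul, dotProduct, add_comm]

/-- Writing the row as `(a, s)`: `lower y₀` makes `a` nonzero, then `upper x` makes `s = 1`, and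
finally `lower (-a)` clears `a`. -/
lemma exists_vecMul_lower_upper_lower [Nonempty ι] {r : ι ⊕ Fin 1 → F} (hr : r ≠ 0) :
    ∃ y₀ x y : ι → F, r ᵥ* ((lower y₀ * upper x * lower y : SpecialLinearGroup (ι ⊕ Fin 1) F) :
      Matrix (ι ⊕ Fin 1) (ι ⊕ Fin 1) F) = Sum.elim (0 : ι → F) (fun _ => 1) := by
  obtain ⟨a, s, rfl⟩ : ∃ (a : ι → F) (s : F), r = Sum.elim a (fun _ => s) :=
    ⟨r ∘ Sum.inl, r (Sum.inr 0), by ext (k | k) <;> simp [Fin.fin_one_eq_zero]⟩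
  obtain ⟨y₀, hy₀⟩ : ∃ y₀, a + s • y₀ ≠ 0 := by
    by_cases ha : a = 0
    · have hs : s ≠ 0 := fun hs => hr (by ext (k | k) <;> simp [ha, hs])
      exact ⟨Pi.single (Classical.arbitrary ι) 1, by simp [ha, hs]⟩
    · exact ⟨0, by simpa using ha⟩
  obtain ⟨j, hj⟩ := Function.ne_iff.1 hy₀
  set a' := a + s • y₀
  refine ⟨y₀, Pi.single j ((1 - s) / a' j), -a', ?_⟩
  simp only [coe_mul, ← vecMul_vecMul, elim_vecMul_lower, elim_vecMul_upper, dotProduct_single]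
  rw [mul_div_cancel₀ _ hj]
  simp [a']

lemma exists_eq_blockDiag_mul_upper (g : SpecialLinearGroup (ι ⊕ Fin 1) F)
    (hg : (g : Matrix (ι ⊕ Fin 1) (ι ⊕ Fin 1) F) (Sum.inr 0) = Sum.elim (0 : ι → F) (fun _ => 1)) :
    ∃ (A : SpecialLinearGroup ι F) (x : ι → F), g = blockDiag A * upper x := by
  have h₂₁ : toBlocks₂₁ (g : Matrix (ι ⊕ Fin 1) (ι ⊕ Fin 1) F) = 0 := by
    ext k j
    fin_cases k
    simpa [toBlocks₂₁] using congr_fun hg (Sum.inl j)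
  have h₂₂ : toBlocks₂₂ (g : Matrix (ι ⊕ Fin 1) (ι ⊕ Fin 1) F) = 1 := by
    ext k j
    fin_cases k; fin_cases j
    simpa [toBlocks₂₂] using congr_fun hg (Sum.inr 0)
  have hg' := fromBlocks_toBlocks (g : Matrix (ι ⊕ Fin 1) (ι ⊕ Fin 1) F)
  rw [h₂₁, h₂₂] at hg'
  have hA : (toBlocks₁₁ (g : Matrix (ι ⊕ Fin 1) (ι ⊕ Fin 1) F)).det = 1 := by
    have h := g.det_coe
    rwa [← hg', det_fromBlocks_zero₂₁, det_one, mul_one] at h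
  set A : SpecialLinearGroup ι F := ⟨_, hA⟩
  set v : ι → F := fun i => toBlocks₁₂ (g : Matrix (ι ⊕ Fin 1) (ι ⊕ Fin 1) F) i 0
  refine ⟨A, A⁻¹ • v, ?_⟩
  rw [blockDiag_mul_upper, smul_inv_smul]
  refine Subtype.ext ?_
  rw [coe_mul, coe_upper, coe_blockDiag, fromBlocks_multiply, ← hg']
  congr 1 <;> simp [A, v]
  ext i k
  fin_cases k
  rfl

theorem sandwichWord_blockDiag_eq_univ [Nontrivial ι] (i : ι) :
    sandwichWord (range blockDiag) (upper (Pi.single i (1 : F))) (lower (Pi.single i 1)) =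
      univ := by
  refine eq_univ_of_forall fun g => ?_
  obtain ⟨y₀, x, y, hr⟩ := exists_vecMul_lower_upper_lower (g.row_ne_zero (Sum.inr 0))
  obtain ⟨A, z, hA⟩ := exists_eq_blockDiag_mul_upper (g * (lower y₀ * upper x * lower y)) hr
  have hg : g = blockDiag A * upper z * lower (-y) * upper (-x) * lower (-y₀) := by
    rw [lower_neg, upper_neg, lower_neg, ← hA]
    group
  rw [hg]
  exact mul_mem_mul (mul_mem_mul (mul_mem_mul (mul_mem_mul ⟨A, rfl⟩
    (upper_mem_sandwich i z)) (lower_mem_sandwich i _)) (upper_mem_sandwich i _))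
    (lower_mem_sandwich i _)

end SLBlock

section Embedding

variable {F : Type*} [Field F]

def embedSL (d : ℕ) : SpecialLinearGroup (Fin d) F →* SpecialLinearGroup (Fin (d + 1)) F :=
  (SpecialLinearGroup.reindex finSumFinEquiv).toMonoidHom.comp SLBlock.blockDiag

lemma coe_embedSL {d : ℕ} (A : SpecialLinearGroup (Fin d) F) :
    (embedSL d A : Matrix (Fin (d + 1)) (Fin (d + 1)) F) =
      embedMat (A : Matrix (Fin d) (Fin d) F) := by
  ext i j
  refine Fin.addCases (fun i => ?_) (fun i => ?_) i <;>
    refine Fin.addCases (fun j => ?_) (fun j => ?_) j <;>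
    simp [embedSL, SpecialLinearGroup.coe_reindex, SLBlock.coe_blockDiag, embedMat, one_apply]
  exact Subsingleton.elim _ _

theorem exists_sandwichWord_range_embedSL_eq_univ {d : ℕ} (hd : 2 ≤ d) :
    ∃ s t, sandwichWord (range (embedSL (F := F) d)) s t = univ := by
  have := Fin.nontrivial_iff_two_le.2 hd
  set f := (SpecialLinearGroup.reindex (R := F) (finSumFinEquiv (m := d) (n := 1))).toMonoidHom
  set i : Fin d := ⟨0, by omega⟩
  refine ⟨f (SLBlock.upper (Pi.single i 1)), f (SLBlock.lower (Pi.single i 1)), ?_⟩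
  rw [embedSL, MonoidHom.coe_comp, range_comp, ← image_sandwichWord,
    SLBlock.sandwichWord_blockDiag_eq_univ]
  exact image_univ_of_surjective (SpecialLinearGroup.reindex _).surjective

end Embedding

theorem stmt_14_general (d : ℕ → ℕ) (hd : ∀ n, 2 ≤ d n) (F : ℕ → Type*)
    [∀ n, Field (F n)] :
    ∃ S : Finset (∀ n, Matrix.SpecialLinearGroup (Fin (d n + 1)) (F n)),
      Subgroup.closure
        ({g : ∀ n, Matrix.SpecialLinearGroup (Fin (d n + 1)) (F n) |
            ∀ n, ∃ A : Matrix.SpecialLinearGroup (Fin (d n)) (F n),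
              (g n : Matrix (Fin (d n + 1)) (Fin (d n + 1)) (F n)) =
                embedMat (A : Matrix (Fin (d n)) (Fin (d n)) (F n))}
          ∪ (S : Set (∀ n, Matrix.SpecialLinearGroup (Fin (d n + 1)) (F n)))) = ⊤ := by
  obtain ⟨S, hS⟩ := exists_finset_closure_univ_pi_union_eq_top
    (fun n => range (embedSL (F := F n) (d n)))
    fun n => exists_sandwichWord_range_embedSL_eq_univ (hd n)
  refine ⟨S, eq_top_iff.2 (hS ▸ Subgroup.closure_mono (union_subset_union_left _ ?_))⟩
  rintro g hg n
  obtain ⟨A, hA⟩ := hg n trivial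
  exact ⟨A, hA ▸ coe_embedSL A⟩

/-- `∏ n, SL(dₙ + 1, Fₙ)` is finitely generated over the subgroup `∏ n, SL(dₙ, Fₙ)`
(embedded block-diagonally as `A ↦ diag(A, 1)`). -/
theorem stmt_14 (d : ℕ → ℕ) (hd : ∀ n, 2 ≤ d n) (F : ℕ → Type*)
    [∀ n, Field (F n)] [∀ n, Fintype (F n)] :
    ∃ S : Finset (∀ n, Matrix.SpecialLinearGroup (Fin (d n + 1)) (F n)),
      Subgroup.closure
        ({g : ∀ n, Matrix.SpecialLinearGroup (Fin (d n + 1)) (F n) |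
            ∀ n, ∃ A : Matrix.SpecialLinearGroup (Fin (d n)) (F n),
              (g n : Matrix (Fin (d n + 1)) (Fin (d n + 1)) (F n)) =
                embedMat (A : Matrix (Fin (d n)) (Fin (d n)) (F n))}
          ∪ (S : Set (∀ n, Matrix.SpecialLinearGroup (Fin (d n + 1)) (F n)))) = ⊤ :=
  stmt_14_general d hd F
end
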